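/- arXiv:2506.13269 — 2 statements merged into one kernel-verified Lean document; each statement's English description precedes it below -/
import Mathlib

section
/- Let G and H be regular graphs with degrees d_G and d_H, x ∈ V(G), and y1y2 ∈ E(H). In the Cartesian product G □ H, the minimum total transport cost over all bijections φ between R_{(x,y1)}((x,y1),(x,y2)) and R_{(x,y2)}((x,y1),(x,y2)) of ∑_z d(z, φ(z)) equals d_G plus the corresponding minimum cost over bijections between R_{y1}(y1,y2) and R_{y2}(y1,y2) in H. -/
open SimpleGraph Filter Set

noncomputable section
attribute [local instance] Classical.propDecidable

variable {V α β : Type*}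

/-- The strong product of two simple graphs. -/
def StrongProd (G : SimpleGraph α) (H : SimpleGraph β) : SimpleGraph (α × β) where
  Adj p q := p ≠ q ∧ (p.1 = q.1 ∨ G.Adj p.1 q.1) ∧ (p.2 = q.2 ∨ H.Adj p.2 q.2)
  symm := by
    constructor
    rintro p q ⟨h1, h2, h3⟩
    exact ⟨h1.symm, h2.imp Eq.symm Adj.symm, h3.imp Eq.symm Adj.symm⟩
  loopless := ⟨fun p h => h.1 rfl⟩

/-- Closed neighborhood N[x]. -/
def closedNbr (G : SimpleGraph V) (x : V) : Set V := insert x (G.neighborSet x)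

/-- The set R_x(x,y) = N(x) \ ((N(x) ∩ N(y)) ∪ {y}). -/
def Rside (G : SimpleGraph V) (x y : V) : Set V :=
  G.neighborSet x \ ((G.neighborSet x ∩ G.neighborSet y) ∪ {y})

/-- Total transport cost of an assignment (bijection) between R_x(x,y) and R_y(x,y). -/
def cost (G : SimpleGraph V) (x y : V) (φ : Rside G x y ≃ Rside G y x) : ℝ :=
  ∑' z : Rside G x y, (G.dist z.1 (φ z).1 : ℝ)

/-- The optimal (minimal) total transport cost over all assignments. -/
def OPTc (G : SimpleGraph V) (x y : V) : ℝ :=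
  sInf { c | ∃ φ : Rside G x y ≃ Rside G y x, c = cost G x y φ }

/-- An assignment is optimal if it attains the minimal total cost. -/
def IsOptimal (G : SimpleGraph V) (x y : V) (φ : Rside G x y ≃ Rside G y x) : Prop :=
  cost G x y φ = OPTc G x y

/-- The largest displacement appearing in an optimal assignment, maximized over
optimal assignments. -/
def MAXc (G : SimpleGraph V) (x y : V) : ℝ :=
  sSup { m | ∃ φ : Rside G x y ≃ Rside G y x, IsOptimal G x y φ ∧
    m = ⨆ z : Rside G x y, (G.dist z.1 (φ z).1 : ℝ) }

/-- The measure μ_x^α. -/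
def muMeas (G : SimpleGraph V) [G.LocallyFinite] (α : ℝ) (x : V) : V → ℝ :=
  fun z => if z = x then α else if G.Adj x z then (1 - α) / (G.degree x) else 0

/-- Wasserstein (optimal transport) distance between two measures with respect to
the graph distance. -/
def Wass (G : SimpleGraph V) (μ ν : V → ℝ) : ℝ :=
  sInf { c | ∃ π : V → V → ℝ, (∀ u v, 0 ≤ π u v) ∧
    (∀ u, ∑' v, π u v = μ u) ∧ (∀ v, ∑' u, π u v = ν v) ∧
    c = ∑' u, ∑' v, (G.dist u v : ℝ) * π u v }

/-- The α-Ricci (Ollivier) curvature of an edge xy. -/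
def kap (G : SimpleGraph V) [G.LocallyFinite] (α : ℝ) (x y : V) : ℝ :=
  1 - Wass G (muMeas G α x) (muMeas G α y)

/-- Ollivier Ricci curvature with idleness 0. -/
def kap0 (G : SimpleGraph V) [G.LocallyFinite] (x y : V) : ℝ := kap G 0 x y

/-- `IsLLY G x y k` says that the Lin–Lu–Yau curvature of the edge xy exists and
equals k, i.e. κ_α(x,y)/(1-α) → k as α → 1⁻. -/
def IsLLY (G : SimpleGraph V) [G.LocallyFinite] (x y : V) (k : ℝ) : Prop :=
  Tendsto (fun α => kap G α x y / (1 - α)) (nhdsWithin 1 (Set.Iio 1)) (nhds k)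


/- AUX START -/
lemma boxProd_walk_edist_le {G : SimpleGraph α} {H : SimpleGraph β} {p q : α × β}
    (w : (G.boxProd H).Walk p q) :
    G.edist p.1 q.1 + H.edist p.2 q.2 ≤ (w.length : ℕ∞) := by
  induction w with
  | nil => simp
  | @cons u v r h w ih =>
    rcases SimpleGraph.boxProd_adj.1 h with ⟨hGa, he⟩ | ⟨hHa, heq⟩
    · have h1 : G.edist u.1 v.1 ≤ 1 := le_of_eq (SimpleGraph.edist_eq_one_iff_adj.2 hGa)
      calc G.edist u.1 r.1 + H.edist u.2 r.2
          ≤ (G.edist u.1 v.1 + G.edist v.1 r.1) + H.edist v.2 r.2 := by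
            rw [← he]; gcongr; exact SimpleGraph.edist_triangle
        _ ≤ 1 + (G.edist v.1 r.1 + H.edist v.2 r.2) := by rw [add_assoc]; gcongr
        _ ≤ 1 + (w.length : ℕ∞) := by gcongr
        _ = ((SimpleGraph.Walk.cons h w).length : ℕ∞) := by
            rw [SimpleGraph.Walk.length_cons]; push_cast; ring
    · have h1 : H.edist u.2 v.2 ≤ 1 := le_of_eq (SimpleGraph.edist_eq_one_iff_adj.2 hHa)
      calc G.edist u.1 r.1 + H.edist u.2 r.2
          ≤ G.edist v.1 r.1 + (H.edist u.2 v.2 + H.edist v.2 r.2) := by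
            rw [← heq]; gcongr; exact SimpleGraph.edist_triangle
        _ ≤ 1 + (G.edist v.1 r.1 + H.edist v.2 r.2) := by
            rw [add_left_comm]; gcongr
        _ ≤ 1 + (w.length : ℕ∞) := by gcongr
        _ = ((SimpleGraph.Walk.cons h w).length : ℕ∞) := by
            rw [SimpleGraph.Walk.length_cons]; push_cast; ring

lemma boxProd_edist {G : SimpleGraph α} {H : SimpleGraph β} (a c : α) (b d : β) :
    (G.boxProd H).edist (a, b) (c, d) = G.edist a c + H.edist b d := by
  refine le_antisymm ?_ ?_
  · rcases eq_or_ne (G.edist a c) ⊤ with h | h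
    · simp [h]
    rcases eq_or_ne (H.edist b d) ⊤ with h' | h'
    · simp [h']
    obtain ⟨p, hp⟩ := (SimpleGraph.reachable_of_edist_ne_top h).exists_walk_length_eq_edist
    obtain ⟨q, hq⟩ := (SimpleGraph.reachable_of_edist_ne_top h').exists_walk_length_eq_edist
    calc (G.boxProd H).edist (a, b) (c, d)
        ≤ (((p.boxProdLeft H b).append (q.boxProdRight G c)).length : ℕ∞) :=
          SimpleGraph.edist_le _
      _ = G.edist a c + H.edist b d := by
          have e1 : (p.boxProdLeft H b).length = p.length := SimpleGraph.Walk.length_map _ _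
          have e2 : (q.boxProdRight G c).length = q.length := SimpleGraph.Walk.length_map _ _
          rw [SimpleGraph.Walk.length_append, e1, e2, ← hp, ← hq]
          push_cast; ring
  · rcases eq_or_ne ((G.boxProd H).edist (a, b) (c, d)) ⊤ with h | h
    · rw [h]; exact le_top
    obtain ⟨w, hw⟩ := SimpleGraph.exists_walk_of_edist_ne_top h
    calc G.edist a c + H.edist b d ≤ (w.length : ℕ∞) := boxProd_walk_edist_le w
      _ = _ := hw

lemma boxProd_dist {G : SimpleGraph α} {H : SimpleGraph β} {a c : α} {b d : β}
    (hac : G.Reachable a c) (hbd : H.Reachable b d) :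
    (G.boxProd H).dist (a, b) (c, d) = G.dist a c + H.dist b d := by
  have h1 : G.edist a c ≠ ⊤ := SimpleGraph.edist_ne_top_iff_reachable.2 hac
  have h2 : H.edist b d ≠ ⊤ := SimpleGraph.edist_ne_top_iff_reachable.2 hbd
  show ((G.boxProd H).edist (a, b) (c, d)).toNat = _
  rw [boxProd_edist, ENat.toNat_add h1 h2]; rfl

lemma dist_triangle_reach {G : SimpleGraph V} {u v w : V}
    (h1 : G.Reachable u v) (h2 : G.Reachable v w) :
    G.dist u w ≤ G.dist u v + G.dist v w := by
  have ht := SimpleGraph.edist_triangle (G := G) (u := u) (v := v) (w := w)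
  have h1' : G.edist u v ≠ ⊤ := SimpleGraph.edist_ne_top_iff_reachable.2 h1
  have h2' : G.edist v w ≠ ⊤ := SimpleGraph.edist_ne_top_iff_reachable.2 h2
  have hne : G.edist u v + G.edist v w ≠ ⊤ := fun hc => by
    rcases WithTop.add_eq_top.1 hc with h | h
    · exact h1' h
    · exact h2' h
  have := ENat.toNat_le_toNat ht hne
  rwa [ENat.toNat_add h1' h2'] at this

lemma mem_Rside {G : SimpleGraph V} {x y z : V} :
    z ∈ Rside G x y ↔ G.Adj x z ∧ ¬G.Adj y z ∧ z ≠ y := by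
  simp only [Rside, Set.mem_diff, SimpleGraph.mem_neighborSet, Set.mem_union,
    Set.mem_inter_iff, Set.mem_singleton_iff]
  tauto

lemma mem_Rside_boxProd {G : SimpleGraph α} {H : SimpleGraph β} {x : α} {y1 y2 : β}
    (hy : H.Adj y1 y2) (z : α × β) :
    z ∈ Rside (G.boxProd H) (x, y1) (x, y2) ↔
      (G.Adj x z.1 ∧ z.2 = y1) ∨ (z.1 = x ∧ z.2 ∈ Rside H y1 y2) := by
  obtain ⟨a, b⟩ := z
  rw [mem_Rside]
  simp only [SimpleGraph.boxProd_adj, mem_Rside, ne_eq]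
  constructor
  · rintro ⟨hadj, hnadj, hne⟩
    rcases hadj with ⟨hga, hb⟩ | ⟨hhb, ha⟩
    · exact Or.inl ⟨hga, hb.symm⟩
    · refine Or.inr ⟨ha.symm, hhb, fun h2b => ?_, fun hb2 => ?_⟩
      · exact hnadj (Or.inr ⟨h2b, ha⟩)
      · exact hne (Prod.ext ha.symm hb2)
  · rintro (⟨hga, rfl⟩ | ⟨rfl, hb1, hnb2, hbne⟩)
    · refine ⟨Or.inl ⟨hga, rfl⟩, ?_, ?_⟩
      · rintro (⟨_, h⟩ | ⟨_, h⟩)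
        · exact hy.ne h.symm
        · exact hga.ne h
      · intro h; exact hy.ne (congrArg Prod.snd h)
    · refine ⟨Or.inr ⟨hb1, rfl⟩, ?_, ?_⟩
      · rintro (⟨h, _⟩ | ⟨h, _⟩)
        · exact G.irrefl h
        · exact hnb2 h
      · intro h; exact hbne (congrArg Prod.snd h)

def Rsplit {G : SimpleGraph α} {H : SimpleGraph β} {x : α} {y1 y2 : β} (hy : H.Adj y1 y2) :
    ↥(Rside (G.boxProd H) (x, y1) (x, y2)) ≃ ↥(G.neighborSet x) ⊕ ↥(Rside H y1 y2) where
  toFun z :=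
    if h : z.1.2 = y1 then
      Sum.inl ⟨z.1.1, by
        rcases (mem_Rside_boxProd hy _).1 z.2 with ⟨h1, _⟩ | ⟨_, h2⟩
        · exact h1
        · exact absurd h (mem_Rside.1 h2).1.ne'⟩
    else
      Sum.inr ⟨z.1.2, by
        rcases (mem_Rside_boxProd hy _).1 z.2 with ⟨_, h1⟩ | ⟨_, h2⟩
        · exact absurd h1 h
        · exact h2⟩
  invFun s := Sum.elim
      (fun a => ⟨(a.1, y1), (mem_Rside_boxProd hy _).2 (Or.inl ⟨a.2, rfl⟩)⟩)
      (fun b => ⟨(x, b.1), (mem_Rside_boxProd hy _).2 (Or.inr ⟨rfl, b.2⟩)⟩) s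
  left_inv z := by
    dsimp only
    by_cases h : z.1.2 = y1
    · rw [dif_pos h]
      exact Subtype.ext (Prod.ext rfl h.symm)
    · rw [dif_neg h]
      have hx : z.1.1 = x := by
        rcases (mem_Rside_boxProd hy _).1 z.2 with ⟨_, h1⟩ | ⟨h1, _⟩
        · exact absurd h1 h
        · exact h1
      exact Subtype.ext (Prod.ext hx.symm rfl)
  right_inv s := by
    rcases s with a | b
    · dsimp only [Sum.elim_inl]
      rw [dif_pos rfl]
    · dsimp only [Sum.elim_inr]
      rw [dif_neg (mem_Rside.1 b.2).1.ne']

@[simp] lemma Rsplit_symm_inl {G : SimpleGraph α} {H : SimpleGraph β} {x : α} {y1 y2 : β}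
    (hy : H.Adj y1 y2) (a : ↥(G.neighborSet x)) :
    (((Rsplit (G := G) (x := x) hy).symm (Sum.inl a)) : α × β) = (a.1, y1) := rfl

@[simp] lemma Rsplit_symm_inr {G : SimpleGraph α} {H : SimpleGraph β} {x : α} {y1 y2 : β}
    (hy : H.Adj y1 y2) (b : ↥(Rside H y1 y2)) :
    (((Rsplit (G := G) (x := x) hy).symm (Sum.inr b)) : α × β) = (x, b.1) := rfl

lemma sum_equiv_lower {A B₁ B₂ : Type*} [Fintype A] [Fintype B₁] [Fintype B₂]
    (D : A ⊕ B₁ → A ⊕ B₂ → ℝ) (C : ℝ)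
    (h1 : ∀ a, D (Sum.inl a) (Sum.inl a) = 1)
    (h2 : ∀ a a', 1 ≤ D (Sum.inl a) (Sum.inl a'))
    (h3 : ∀ s a b₂, D s (Sum.inr b₂) + 1 ≤ D s (Sum.inl a) + D (Sum.inl a) (Sum.inr b₂))
    (h4 : ∀ τ : B₁ ≃ B₂, C ≤ ∑ b, D (Sum.inr b) (Sum.inr (τ b)))
    (σ : (A ⊕ B₁) ≃ (A ⊕ B₂)) :
    C + (Fintype.card A : ℝ) ≤ ∑ s, D s (σ s) := by
  classical
  have main : ∀ σ : (A ⊕ B₁) ≃ (A ⊕ B₂), (∀ a, ∃ a', σ (Sum.inl a) = Sum.inl a') →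
      C + (Fintype.card A : ℝ) ≤ ∑ s, D s (σ s) := by
    intro σ hall
    choose f hf using hall
    have hfinj : Function.Injective f := fun a a' h => by
      have heq : σ (Sum.inl a) = σ (Sum.inl a') := by rw [hf a, hf a', h]
      exact Sum.inl_injective (σ.injective heq)
    have hfsurj := Finite.injective_iff_surjective.1 hfinj
    have hB : ∀ b : B₁, ∃ b₂ : B₂, σ (Sum.inr b) = Sum.inr b₂ := by
      intro b
      rcases hc : σ (Sum.inr b) with a | b₂
      · obtain ⟨a₀, ha₀⟩ := hfsurj a
        have heq2 : σ (Sum.inl a₀) = σ (Sum.inr b) := by rw [hf a₀, ha₀, hc]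
        have heq : (Sum.inl a₀ : A ⊕ B₁) = Sum.inr b := σ.injective heq2
        exact absurd heq (by simp)
      · exact ⟨b₂, rfl⟩
    choose g hg using hB
    have hginj : Function.Injective g := fun b b' h => by
      have heq : σ (Sum.inr b) = σ (Sum.inr b') := by rw [hg b, hg b', h]
      exact Sum.inr_injective (σ.injective heq)
    have hgsurj : Function.Surjective g := by
      intro b₂
      rcases hc : σ.symm (Sum.inr b₂) with a | b
      · exfalso
        have hσa : σ (Sum.inl a) = Sum.inr b₂ := by rw [← hc, Equiv.apply_symm_apply]
        rw [hf a] at hσa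
        simp at hσa
      · refine ⟨b, ?_⟩
        have hσb : σ (Sum.inr b) = Sum.inr b₂ := by rw [← hc, Equiv.apply_symm_apply]
        rw [hg b] at hσb
        exact Sum.inr_injective hσb
    let τ : B₁ ≃ B₂ := Equiv.ofBijective g ⟨hginj, hgsurj⟩
    rw [Fintype.sum_sum_type]
    have hA : (Fintype.card A : ℝ) ≤ ∑ a, D (Sum.inl a) (σ (Sum.inl a)) := by
      calc (Fintype.card A : ℝ) = ∑ _a : A, (1 : ℝ) := by simp
        _ ≤ _ := Finset.sum_le_sum fun a _ => by rw [hf a]; exact h2 a (f a)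
    have hBsum : C ≤ ∑ b, D (Sum.inr b) (σ (Sum.inr b)) := by
      calc C ≤ ∑ b, D (Sum.inr b) (Sum.inr (τ b)) := h4 τ
        _ = ∑ b, D (Sum.inr b) (σ (Sum.inr b)) :=
          Finset.sum_congr rfl fun b _ => by rw [hg b]; rfl
    linarith
  suffices key : ∀ n (σ : (A ⊕ B₁) ≃ (A ⊕ B₂)),
      (Finset.univ.filter fun a => σ (Sum.inl a) ≠ Sum.inl a).card ≤ n →
      C + (Fintype.card A : ℝ) ≤ ∑ s, D s (σ s) from key _ σ le_rfl
  intro n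
  induction n with
  | zero =>
    intro σ hσ
    apply main
    intro a
    refine ⟨a, ?_⟩
    by_contra h
    have ha : a ∈ Finset.univ.filter fun a => σ (Sum.inl a) ≠ Sum.inl a := by
      simp only [Finset.mem_filter, Finset.mem_univ, true_and]; exact h
    rw [Nat.le_zero, Finset.card_eq_zero] at hσ
    rw [hσ] at ha
    exact absurd ha (Finset.notMem_empty a)
  | succ n ih =>
    intro σ hσ
    by_cases hall : ∀ a, ∃ a', σ (Sum.inl a) = Sum.inl a'
    · exact main σ hall
    push_neg at hall
    obtain ⟨a, ha⟩ := hall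
    obtain ⟨b₂, hb₂⟩ : ∃ b₂, σ (Sum.inl a) = Sum.inr b₂ := by
      rcases hc : σ (Sum.inl a) with a' | b₂
      · exact absurd hc (ha a')
      · exact ⟨b₂, rfl⟩
    set s₀ := σ.symm (Sum.inl a) with hs₀def
    have hσs₀ : σ s₀ = Sum.inl a := Equiv.apply_symm_apply _ _
    have hs₀ne : s₀ ≠ Sum.inl a := fun h => ha a (h ▸ hσs₀)
    set σ' := (Equiv.swap s₀ (Sum.inl a)).trans σ with hσ'def
    have hσ'1 : σ' (Sum.inl a) = Sum.inl a := by
      simp only [hσ'def, Equiv.trans_apply, Equiv.swap_apply_right]; exact hσs₀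
    have hσ'2 : σ' s₀ = Sum.inr b₂ := by
      simp only [hσ'def, Equiv.trans_apply, Equiv.swap_apply_left]; exact hb₂
    have hσ'3 : ∀ s, s ≠ s₀ → s ≠ Sum.inl a → σ' s = σ s := by
      intro s hs1 hs2
      simp only [hσ'def, Equiv.trans_apply, Equiv.swap_apply_of_ne_of_ne hs1 hs2]
    have hsub : (Finset.univ.filter fun a' => σ' (Sum.inl a') ≠ Sum.inl a') ⊆
        (Finset.univ.filter fun a' => σ (Sum.inl a') ≠ Sum.inl a').erase a := by
      intro a' ha'
      simp only [Finset.mem_filter, Finset.mem_univ, true_and] at ha'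
      have hne : a' ≠ a := by rintro rfl; exact ha' hσ'1
      refine Finset.mem_erase.2 ⟨hne, ?_⟩
      simp only [Finset.mem_filter, Finset.mem_univ, true_and]
      by_cases hs : (Sum.inl a' : A ⊕ B₁) = s₀
      · intro h
        rw [hs, hσs₀] at h
        exact hne (Sum.inl_injective h).symm
      · rw [← hσ'3 _ hs (fun h => hne (Sum.inl_injective h))]
        exact ha'
    have hmem : a ∈ Finset.univ.filter fun a' => σ (Sum.inl a') ≠ Sum.inl a' := by
      simp only [Finset.mem_filter, Finset.mem_univ, true_and]
      rw [hb₂]; simp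
    have hcard : (Finset.univ.filter fun a' => σ' (Sum.inl a') ≠ Sum.inl a').card ≤ n := by
      calc _ ≤ ((Finset.univ.filter fun a' => σ (Sum.inl a') ≠ Sum.inl a').erase a).card :=
            Finset.card_le_card hsub
        _ = (Finset.univ.filter fun a' => σ (Sum.inl a') ≠ Sum.inl a').card - 1 :=
            Finset.card_erase_of_mem hmem
        _ ≤ (n + 1) - 1 := Nat.sub_le_sub_right hσ 1
        _ = n := rfl
    have hle := ih σ' hcard
    have hcost : ∑ s, D s (σ' s) ≤ ∑ s, D s (σ s) := by
      have hzero : ∀ s ∈ Finset.univ, s ∉ ({s₀, Sum.inl a} : Finset (A ⊕ B₁)) →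
          D s (σ' s) - D s (σ s) = 0 := by
        intro s _ hs
        simp only [Finset.mem_insert, Finset.mem_singleton] at hs
        push_neg at hs
        rw [hσ'3 s hs.1 hs.2]; ring
      have hsum : ∑ s ∈ ({s₀, Sum.inl a} : Finset (A ⊕ B₁)), (D s (σ' s) - D s (σ s)) =
          ∑ s, (D s (σ' s) - D s (σ s)) :=
        Finset.sum_subset (Finset.subset_univ _) hzero
      rw [Finset.sum_pair hs₀ne] at hsum
      rw [hσ'2, hσ'1, hσs₀, hb₂] at hsum
      have ht := h3 s₀ a b₂
      have h1a := h1 a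
      have hdistrib : ∑ s, (D s (σ' s) - D s (σ s)) = ∑ s, D s (σ' s) - ∑ s, D s (σ s) :=
        Finset.sum_sub_distrib _ _
      linarith
    linarith
/- AUX END -/

theorem opt_boxProd [Fintype α] [Fintype β] (G : SimpleGraph α) (H : SimpleGraph β)
    (dG dH : ℕ) (hG : G.IsRegularOfDegree dG) (hH : H.IsRegularOfDegree dH)
    (x : α) (y1 y2 : β) (hy : H.Adj y1 y2) :
    OPTc (G.boxProd H) (x, y1) (x, y2) = (dG : ℝ) + OPTc H y1 y2 := by
  classical
  set e₁ := Rsplit (G := G) (x := x) hy with he₁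
  set e₂ := Rsplit (G := G) (x := x) hy.symm with he₂
  set D : (↥(G.neighborSet x) ⊕ ↥(Rside H y1 y2)) →
      (↥(G.neighborSet x) ⊕ ↥(Rside H y2 y1)) → ℝ :=
    fun s t => ((G.boxProd H).dist ((e₁.symm s) : α × β) ((e₂.symm t) : α × β) : ℝ) with hD
  have hax : ∀ a : ↥(G.neighborSet x), G.Adj x a.1 := fun a => a.2
  have hb1 : ∀ b : ↥(Rside H y1 y2), H.Adj y1 b.1 := fun b => (mem_Rside.1 b.2).1
  have hb2 : ∀ b : ↥(Rside H y2 y1), H.Adj y2 b.1 := fun b => (mem_Rside.1 b.2).1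
  have hd12 : H.dist y1 y2 = 1 := SimpleGraph.dist_eq_one_iff_adj.2 hy
  have hDll : ∀ a a', D (Sum.inl a) (Sum.inl a') = (G.dist a.1 a'.1 : ℝ) + 1 := by
    intro a a'
    simp only [hD, he₁, he₂, Rsplit_symm_inl]
    rw [boxProd_dist ((hax a).symm.reachable.trans (hax a').reachable) hy.reachable, hd12]
    push_cast; ring
  have hDlr : ∀ a b₂, D (Sum.inl a) (Sum.inr b₂) = 1 + (H.dist y1 b₂.1 : ℝ) := by
    intro a b₂
    simp only [hD, he₁, he₂, Rsplit_symm_inl, Rsplit_symm_inr]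
    rw [boxProd_dist (hax a).symm.reachable (hy.reachable.trans (hb2 b₂).reachable),
      SimpleGraph.dist_eq_one_iff_adj.2 (hax a).symm]
    push_cast; ring
  have hDrl : ∀ b a', D (Sum.inr b) (Sum.inl a') = 1 + (H.dist b.1 y2 : ℝ) := by
    intro b a'
    simp only [hD, he₁, he₂, Rsplit_symm_inl, Rsplit_symm_inr]
    rw [boxProd_dist (hax a').reachable ((hb1 b).symm.reachable.trans hy.reachable),
      SimpleGraph.dist_eq_one_iff_adj.2 (hax a')]
    push_cast; ring
  have hDrr : ∀ b b₂, D (Sum.inr b) (Sum.inr b₂) = (H.dist b.1 b₂.1 : ℝ) := by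
    intro b b₂
    simp only [hD, he₁, he₂, Rsplit_symm_inr]
    rw [boxProd_dist (SimpleGraph.Reachable.refl x)
      (((hb1 b).symm.reachable.trans hy.reachable).trans (hb2 b₂).reachable),
      SimpleGraph.dist_self]
    push_cast; ring
  have hcardA : Fintype.card ↥(G.neighborSet x) = dG := by
    rw [← hG x, ← SimpleGraph.card_neighborSet_eq_degree]
  have hNcard : ∀ u : β, (H.neighborSet u).ncard = dH := by
    intro u
    rw [← Nat.card_coe_set_eq, Nat.card_eq_fintype_card, ← hH u,
      ← SimpleGraph.card_neighborSet_eq_degree]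
  have hRcard : ∀ u v : β, H.Adj u v →
      (Rside H u v).ncard = dH - ((H.neighborSet u ∩ H.neighborSet v).ncard + 1) := by
    intro u v huv
    have hsub : (H.neighborSet u ∩ H.neighborSet v) ∪ {v} ⊆ H.neighborSet u := by
      rintro z (⟨h, _⟩ | h)
      · exact h
      · rw [Set.mem_singleton_iff] at h; subst h; exact huv
    rw [show Rside H u v
        = H.neighborSet u \ ((H.neighborSet u ∩ H.neighborSet v) ∪ {v}) from rfl,
      Set.ncard_diff hsub, Set.union_singleton,
      Set.ncard_insert_of_notMem (fun h => H.irrefl h.2), hNcard u]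
  have hcardB : Fintype.card ↥(Rside H y1 y2) = Fintype.card ↥(Rside H y2 y1) := by
    rw [← Nat.card_eq_fintype_card, Nat.card_coe_set_eq,
      ← Nat.card_eq_fintype_card, Nat.card_coe_set_eq,
      hRcard y1 y2 hy, hRcard y2 y1 hy.symm, Set.inter_comm]
  obtain ⟨τ0⟩ : Nonempty (↥(Rside H y1 y2) ≃ ↥(Rside H y2 y1)) := Fintype.card_eq.1 hcardB
  have hcostH : ∀ τ : ↥(Rside H y1 y2) ≃ ↥(Rside H y2 y1),
      cost H y1 y2 τ = ∑ b, (H.dist b.1 (τ b).1 : ℝ) := fun τ => tsum_fintype _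
  have hSHfin : {c | ∃ ψ : ↥(Rside H y1 y2) ≃ ↥(Rside H y2 y1), c = cost H y1 y2 ψ}.Finite := by
    rw [show {c | ∃ ψ : ↥(Rside H y1 y2) ≃ ↥(Rside H y2 y1), c = cost H y1 y2 ψ}
        = Set.range (cost H y1 y2) by ext c; simp [eq_comm]]
    exact Set.finite_range _
  have hSHne : {c | ∃ ψ : ↥(Rside H y1 y2) ≃ ↥(Rside H y2 y1), c = cost H y1 y2 ψ}.Nonempty :=
    ⟨cost H y1 y2 τ0, τ0, rfl⟩
  have hOPTle : ∀ τ : ↥(Rside H y1 y2) ≃ ↥(Rside H y2 y1), OPTc H y1 y2 ≤ cost H y1 y2 τ :=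
    fun τ => csInf_le hSHfin.bddBelow ⟨τ, rfl⟩
  have hOPTmem : OPTc H y1 y2 ∈
      {c | ∃ ψ : ↥(Rside H y1 y2) ≃ ↥(Rside H y2 y1), c = cost H y1 y2 ψ} :=
    Set.Nonempty.csInf_mem hSHne hSHfin
  obtain ⟨ψ₀, hψ₀⟩ := hOPTmem
  have hcost_eq : ∀ φ : ↥(Rside (G.boxProd H) (x, y1) (x, y2)) ≃
      ↥(Rside (G.boxProd H) (x, y2) (x, y1)),
      cost (G.boxProd H) (x, y1) (x, y2) φ = ∑ s, D s ((e₁.symm.trans (φ.trans e₂)) s) := by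
    intro φ
    rw [show cost (G.boxProd H) (x, y1) (x, y2) φ
        = ∑' z : ↥(Rside (G.boxProd H) (x, y1) (x, y2)),
          ((G.boxProd H).dist z.1 (φ z).1 : ℝ) from rfl, tsum_fintype]
    refine Fintype.sum_equiv e₁ _ _ fun z => ?_
    simp only [hD, Equiv.trans_apply, Equiv.symm_apply_apply]
  set φ₀ := e₁.trans ((Equiv.sumCongr (Equiv.refl ↥(G.neighborSet x)) ψ₀).trans e₂.symm)
    with hφ₀
  have hσφ₀ : e₁.symm.trans (φ₀.trans e₂)
      = Equiv.sumCongr (Equiv.refl ↥(G.neighborSet x)) ψ₀ := by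
    ext s
    simp [hφ₀]
  have hcostφ₀ : cost (G.boxProd H) (x, y1) (x, y2) φ₀ = (dG : ℝ) + OPTc H y1 y2 := by
    rw [hcost_eq φ₀, hσφ₀, Fintype.sum_sum_type]
    have hterm1 : ∀ a, D (Sum.inl a)
        ((Equiv.sumCongr (Equiv.refl ↥(G.neighborSet x)) ψ₀) (Sum.inl a)) = 1 := by
      intro a
      rw [show (Equiv.sumCongr (Equiv.refl ↥(G.neighborSet x)) ψ₀) (Sum.inl a)
          = Sum.inl a by simp, hDll, SimpleGraph.dist_self]
      norm_num
    have hterm2 : ∀ b, D (Sum.inr b)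
        ((Equiv.sumCongr (Equiv.refl ↥(G.neighborSet x)) ψ₀) (Sum.inr b))
        = (H.dist b.1 (ψ₀ b).1 : ℝ) := by
      intro b
      rw [show (Equiv.sumCongr (Equiv.refl ↥(G.neighborSet x)) ψ₀) (Sum.inr b)
          = Sum.inr (ψ₀ b) by simp]
      exact hDrr b (ψ₀ b)
    rw [Finset.sum_congr rfl fun a _ => hterm1 a, Finset.sum_congr rfl fun b _ => hterm2 b,
      ← hcostH ψ₀, ← hψ₀, Finset.sum_const, Finset.card_univ, hcardA, nsmul_eq_mul, mul_one]
  have hSPfin : {c | ∃ φ : ↥(Rside (G.boxProd H) (x, y1) (x, y2)) ≃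
      ↥(Rside (G.boxProd H) (x, y2) (x, y1)),
      c = cost (G.boxProd H) (x, y1) (x, y2) φ}.Finite := by
    rw [show {c | ∃ φ : ↥(Rside (G.boxProd H) (x, y1) (x, y2)) ≃
        ↥(Rside (G.boxProd H) (x, y2) (x, y1)),
        c = cost (G.boxProd H) (x, y1) (x, y2) φ}
        = Set.range (cost (G.boxProd H) (x, y1) (x, y2)) by ext c; simp [eq_comm]]
    exact Set.finite_range _
  refine le_antisymm (csInf_le hSPfin.bddBelow ⟨φ₀, hcostφ₀.symm⟩) ?_
  refine le_csInf ⟨_, φ₀, rfl⟩ ?_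
  rintro c ⟨φ, rfl⟩
  rw [hcost_eq φ]
  have hy1' : ∀ a, D (Sum.inl a) (Sum.inl a) = 1 := by
    intro a; rw [hDll, SimpleGraph.dist_self]; norm_num
  have hy2' : ∀ a a', 1 ≤ D (Sum.inl a) (Sum.inl a') := by
    intro a a'; rw [hDll]
    have : (0 : ℝ) ≤ (G.dist a.1 a'.1 : ℝ) := Nat.cast_nonneg _
    linarith
  have hy3' : ∀ s a b₂, D s (Sum.inr b₂) + 1 ≤ D s (Sum.inl a) + D (Sum.inl a) (Sum.inr b₂) := by
    rintro (a₀ | b) a b₂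
    · rw [hDlr, hDll, hDlr]
      have : (0 : ℝ) ≤ (G.dist a₀.1 a.1 : ℝ) := Nat.cast_nonneg _
      linarith
    · rw [hDrr, hDrl, hDlr]
      have t1 : H.dist b.1 b₂.1 ≤ H.dist b.1 y2 + H.dist y2 b₂.1 :=
        dist_triangle_reach ((hb1 b).symm.reachable.trans hy.reachable) (hb2 b₂).reachable
      have t2 : H.dist y2 b₂.1 ≤ H.dist y2 y1 + H.dist y1 b₂.1 :=
        dist_triangle_reach hy.symm.reachable (hy.reachable.trans (hb2 b₂).reachable)
      have t3 : H.dist y2 y1 = 1 := SimpleGraph.dist_eq_one_iff_adj.2 hy.symm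
      have c1 : (H.dist b.1 b₂.1 : ℝ) ≤ (H.dist b.1 y2 : ℝ) + (H.dist y2 b₂.1 : ℝ) := by
        exact_mod_cast t1
      have c2 : (H.dist y2 b₂.1 : ℝ) ≤ 1 + (H.dist y1 b₂.1 : ℝ) := by
        rw [t3] at t2; exact_mod_cast t2
      linarith
  have hy4' : ∀ τ : ↥(Rside H y1 y2) ≃ ↥(Rside H y2 y1),
      OPTc H y1 y2 ≤ ∑ b, D (Sum.inr b) (Sum.inr (τ b)) := by
    intro τ
    calc OPTc H y1 y2 ≤ cost H y1 y2 τ := hOPTle τ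
      _ = ∑ b, (H.dist b.1 (τ b).1 : ℝ) := hcostH τ
      _ = ∑ b, D (Sum.inr b) (Sum.inr (τ b)) :=
        Finset.sum_congr rfl fun b _ => (hDrr b (τ b)).symm
  have hkey := sum_equiv_lower D (OPTc H y1 y2) hy1' hy2' hy3' hy4'
    (e₁.symm.trans (φ.trans e₂))
  rw [hcardA] at hkey
  linarith
end
end

section
/- Let G and H be regular graphs with degrees d_G and d_H. For any x ∈ V(G) and adjacent y1, y2 ∈ V(H), κ_0((x,y1),(x,y2)) = (d_H/(d_G + d_H))·κ_0(y1,y2) in the Cartesian product G □ H. -/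
open SimpleGraph Filter Set

noncomputable section
attribute [local instance] Classical.propDecidable

variable {V α β : Type*}

-- ===== auxiliary lemmas =====
section AuxLemmas

variable {G : SimpleGraph α} {H : SimpleGraph β}

lemma dist_le_one_add {u v w : α} (hadj : G.Adj u v) :
    G.dist u w ≤ 1 + G.dist v w := by
  by_cases hr : G.Reachable v w
  · obtain ⟨p, hp⟩ := hr.exists_walk_length_eq_dist
    have h2 := SimpleGraph.dist_le (SimpleGraph.Walk.cons hadj p)
    simpa [hp, Nat.add_comm] using h2
  · have : ¬ G.Reachable u w := fun h => hr (hadj.symm.reachable.trans h)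
    simp [SimpleGraph.dist_eq_zero_of_not_reachable this]

lemma dist_triangle_reachable {u v w : α} (h1 : G.Reachable u v) (h2 : G.Reachable v w) :
    G.dist u w ≤ G.dist u v + G.dist v w := by
  obtain ⟨p, hp⟩ := h1.exists_walk_length_eq_dist
  obtain ⟨q, hq⟩ := h2.exists_walk_length_eq_dist
  rw [← hp, ← hq, ← SimpleGraph.Walk.length_append]
  apply SimpleGraph.dist_le

lemma boxWalk_le {p q : α × β} (w : (G.boxProd H).Walk p q) :
    G.dist p.1 q.1 + H.dist p.2 q.2 ≤ w.length := by
  induction w with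
  | nil => simp
  | @cons p r q h w ih =>
    rw [SimpleGraph.Walk.length_cons]
    rcases (SimpleGraph.boxProd_adj.mp h) with ⟨h1, h2⟩ | ⟨h1, h2⟩
    · have hg := dist_le_one_add (w := q.1) h1
      have : H.dist p.2 q.2 = H.dist r.2 q.2 := by rw [h2]
      omega
    · have hh := dist_le_one_add (w := q.2) h1
      have : G.dist p.1 q.1 = G.dist r.1 q.1 := by rw [h2]
      omega

lemma boxReach_proj {p q : α × β} (h : (G.boxProd H).Reachable p q) :
    G.Reachable p.1 q.1 ∧ H.Reachable p.2 q.2 := by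
  obtain ⟨w⟩ := h
  induction w with
  | nil => exact ⟨Reachable.refl _, Reachable.refl _⟩
  | @cons p r q h w ih =>
    rcases (SimpleGraph.boxProd_adj.mp h) with ⟨h1, h2⟩ | ⟨h1, h2⟩
    · exact ⟨h1.reachable.trans ih.1, h2 ▸ ih.2⟩
    · exact ⟨h2 ▸ ih.1, h1.reachable.trans ih.2⟩

lemma boxProd_reachable {a1 a2 : α} {b1 b2 : β} (hg : G.Reachable a1 a2)
    (hh : H.Reachable b1 b2) : (G.boxProd H).Reachable (a1, b1) (a2, b2) := by
  obtain ⟨w1⟩ := hg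
  obtain ⟨w2⟩ := hh
  exact ⟨(w1.boxProdLeft H b1).append (w2.boxProdRight G a2)⟩

lemma boxDist_le {a1 a2 : α} {b1 b2 : β} (hg : G.Reachable a1 a2) (hh : H.Reachable b1 b2) :
    (G.boxProd H).dist (a1, b1) (a2, b2) ≤ G.dist a1 a2 + H.dist b1 b2 := by
  obtain ⟨w1, hw1⟩ := hg.exists_walk_length_eq_dist
  obtain ⟨w2, hw2⟩ := hh.exists_walk_length_eq_dist
  have h := SimpleGraph.dist_le ((w1.boxProdLeft H b1).append (w2.boxProdRight G a2))
  rw [SimpleGraph.Walk.length_append] at h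
  have e1 : (w1.boxProdLeft H b1).length = w1.length := by
    simp [SimpleGraph.Walk.boxProdLeft, SimpleGraph.Walk.length_map]
    exact SimpleGraph.Walk.length_map ..
  have e2 : (w2.boxProdRight G a2).length = w2.length := by
    simp [SimpleGraph.Walk.boxProdRight, SimpleGraph.Walk.length_map]
    exact SimpleGraph.Walk.length_map ..
  omega

lemma boxDist_right_le (a : α) (b1 b2 : β) :
    (G.boxProd H).dist (a, b1) (a, b2) ≤ H.dist b1 b2 := by
  by_cases hr : H.Reachable b1 b2
  · have := boxDist_le (G := G) (Reachable.refl a) hr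
    simpa [SimpleGraph.dist_self] using this
  · have : ¬ (G.boxProd H).Reachable (a, b1) (a, b2) := fun h => hr (boxReach_proj h).2
    simp [SimpleGraph.dist_eq_zero_of_not_reachable this]

lemma boxDist_ge {p q : α × β} (h : (G.boxProd H).Reachable p q) :
    G.dist p.1 q.1 + H.dist p.2 q.2 ≤ (G.boxProd H).dist p q := by
  obtain ⟨w, hw⟩ := h.exists_walk_length_eq_dist
  rw [← hw]
  exact boxWalk_le w

end AuxLemmas

-- ===== Wasserstein infrastructure =====

def WSet (G : SimpleGraph V) (μ ν : V → ℝ) : Set ℝ :=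
  { c | ∃ π : V → V → ℝ, (∀ u v, 0 ≤ π u v) ∧
    (∀ u, ∑' v, π u v = μ u) ∧ (∀ v, ∑' u, π u v = ν v) ∧
    c = ∑' u, ∑' v, (G.dist u v : ℝ) * π u v }

lemma Wass_eq_sInf (G : SimpleGraph V) (μ ν : V → ℝ) : Wass G μ ν = sInf (WSet G μ ν) := rfl

lemma WSet_nonneg {G : SimpleGraph V} {μ ν : V → ℝ} {c : ℝ} (hc : c ∈ WSet G μ ν) : 0 ≤ c := by
  obtain ⟨π, h0, -, -, hc⟩ := hc
  subst hc
  exact tsum_nonneg fun u => tsum_nonneg fun v =>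
    mul_nonneg (Nat.cast_nonneg _) (h0 u v)

lemma WSet_bddBelow (G : SimpleGraph V) (μ ν : V → ℝ) : BddBelow (WSet G μ ν) :=
  ⟨0, fun _ hc => WSet_nonneg hc⟩

lemma mem_WSet [Fintype V] {G : SimpleGraph V} {μ ν : V → ℝ} (π : V → V → ℝ)
    (h0 : ∀ u v, 0 ≤ π u v) (hr : ∀ u, ∑ v, π u v = μ u) (hc : ∀ v, ∑ u, π u v = ν v) :
    (∑ u, ∑ v, (G.dist u v : ℝ) * π u v) ∈ WSet G μ ν := by
  refine ⟨π, h0, fun u => ?_, fun v => ?_, ?_⟩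
  · rw [tsum_fintype]; exact hr u
  · rw [tsum_fintype]; exact hc v
  · simp only [tsum_fintype]

lemma Wass_le [Fintype V] {G : SimpleGraph V} {μ ν : V → ℝ} (π : V → V → ℝ)
    (h0 : ∀ u v, 0 ≤ π u v) (hr : ∀ u, ∑ v, π u v = μ u) (hc : ∀ v, ∑ u, π u v = ν v) :
    Wass G μ ν ≤ ∑ u, ∑ v, (G.dist u v : ℝ) * π u v :=
  csInf_le (WSet_bddBelow G μ ν) (mem_WSet π h0 hr hc)

lemma le_Wass {G : SimpleGraph V} {μ ν : V → ℝ} {b : ℝ} (hne : (WSet G μ ν).Nonempty)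
    (h : ∀ c ∈ WSet G μ ν, b ≤ c) : b ≤ Wass G μ ν :=
  le_csInf hne h

lemma WSet_nonempty [Fintype V] {G : SimpleGraph V} {μ ν : V → ℝ}
    (hμ0 : ∀ u, 0 ≤ μ u) (hν0 : ∀ v, 0 ≤ ν v)
    (hμ1 : ∑ u, μ u = 1) (hν1 : ∑ v, ν v = 1) : (WSet G μ ν).Nonempty := by
  refine ⟨_, mem_WSet (fun u v => μ u * ν v) (fun u v => mul_nonneg (hμ0 u) (hν0 v))
    (fun u => ?_) (fun v => ?_)⟩
  · rw [← Finset.mul_sum, hν1, mul_one]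
  · rw [← Finset.sum_mul, hμ1, one_mul]

-- ===== small computation helpers =====

lemma collapse_and {W : Type*} [Fintype W] (A : Prop) (c : ℝ) (b0 : W) :
    (∑ v : W, if A ∧ v = b0 then c else 0) = if A then c else 0 := by
  by_cases hA : A
  · simp [hA]
  · simp [hA]

lemma cnt_lem {W : Type*} [Fintype W] (Gr : SimpleGraph W) (d : ℕ)
    (hreg : Gr.IsRegularOfDegree d) (v0 : W) (c : ℝ) :
    (∑ u : W, if Gr.Adj v0 u then c else 0) = d * c := by
  rw [← Finset.sum_filter, Finset.sum_const, nsmul_eq_mul]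
  congr 1
  have h : Finset.univ.filter (fun u => Gr.Adj v0 u) = Gr.neighborFinset v0 := by
    ext u; simp
  rw [h]
  norm_cast
  rw [Gr.card_neighborFinset_eq_degree]
  exact hreg v0
-- ===== measure formulas =====

lemma deg_lem [Fintype α] [Fintype β] (G : SimpleGraph α) (H : SimpleGraph β)
    (dG dH : ℕ) (hG : G.IsRegularOfDegree dG) (hH : H.IsRegularOfDegree dH) (p : α × β) :
    ((G.boxProd H).degree p : ℝ) = (dG : ℝ) + dH := by
  have h : (G.boxProd H).degree p = dG + dH := by
    rw [SimpleGraph.degree_boxProd, hG p.1, hH p.2]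
  rw [h]; push_cast; ring

lemma mu_lem [Fintype α] [Fintype β] (G : SimpleGraph α) (H : SimpleGraph β)
    (dG dH : ℕ) (hG : G.IsRegularOfDegree dG) (hH : H.IsRegularOfDegree dH)
    (x : α) (y' : β) (u : α) (v : β) :
    muMeas (G.boxProd H) 0 (x, y') (u, v) =
      (if G.Adj x u ∧ v = y' then 1 / ((dG : ℝ) + dH) else 0) +
      (if u = x ∧ H.Adj y' v then 1 / ((dG : ℝ) + dH) else 0) := by
  simp only [muMeas]
  by_cases h1 : G.Adj x u ∧ v = y'
  · have hne : (u, v) ≠ ((x, y') : α × β) := fun h => h1.1.ne.symm (congrArg Prod.fst h)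
    have hadj : (G.boxProd H).Adj (x, y') (u, v) :=
      SimpleGraph.boxProd_adj.mpr (Or.inl ⟨h1.1, h1.2.symm⟩)
    rw [if_neg hne, if_pos hadj, deg_lem G H dG dH hG hH, if_pos h1,
      if_neg (fun h2 : u = x ∧ _ => h1.1.ne h2.1.symm)]
    norm_num
  · by_cases h2 : u = x ∧ H.Adj y' v
    · have hne : (u, v) ≠ ((x, y') : α × β) := fun h => h2.2.ne (congrArg Prod.snd h).symm
      have hadj : (G.boxProd H).Adj (x, y') (u, v) :=
        SimpleGraph.boxProd_adj.mpr (Or.inr ⟨h2.2, h2.1.symm⟩)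
      rw [if_neg hne, if_pos hadj, deg_lem G H dG dH hG hH, if_neg h1, if_pos h2]
      norm_num
    · by_cases heq : (u, v) = ((x, y') : α × β)
      · rw [if_pos heq, if_neg h1, if_neg h2]; norm_num
      · have hnadj : ¬ (G.boxProd H).Adj (x, y') (u, v) := by
          intro hadj
          rcases SimpleGraph.boxProd_adj.mp hadj with ⟨ha, hb⟩ | ⟨ha, hb⟩
          · exact h1 ⟨ha, hb.symm⟩
          · exact h2 ⟨hb.symm, ha⟩
        rw [if_neg heq, if_neg hnadj, if_neg h1, if_neg h2]; norm_num

lemma nu_lem [Fintype β] (H : SimpleGraph β) (dH : ℕ) (hH : H.IsRegularOfDegree dH)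
    (y' : β) (v : β) :
    muMeas H 0 y' v = if H.Adj y' v then 1 / (dH : ℝ) else 0 := by
  simp only [muMeas]
  by_cases hv : v = y'
  · subst hv
    rw [if_pos rfl, if_neg (H.irrefl)]
  · rw [if_neg hv]
    by_cases ha : H.Adj y' v
    · rw [if_pos ha, if_pos ha, hH y']; norm_num
    · rw [if_neg ha, if_neg ha]

lemma nusum_lem [Fintype β] (H : SimpleGraph β) (dH : ℕ) (hH : H.IsRegularOfDegree dH)
    (hdH : 0 < dH) (y' : β) : ∑ v, muMeas H 0 y' v = 1 := by
  have hdHR : (0:ℝ) < dH := by exact_mod_cast hdH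
  rw [Finset.sum_congr rfl (fun v _ => nu_lem H dH hH y' v), cnt_lem H dH hH y']
  field_simp

lemma musum_lem [Fintype α] [Fintype β] (G : SimpleGraph α) (H : SimpleGraph β)
    (dG dH : ℕ) (hG : G.IsRegularOfDegree dG) (hH : H.IsRegularOfDegree dH)
    (hdH : 0 < dH) (x : α) (y' : β) :
    ∑ p : α × β, muMeas (G.boxProd H) 0 (x, y') p = 1 := by
  have hdHR : (0:ℝ) < dH := by exact_mod_cast hdH
  have hs0 : (0:ℝ) < (dG : ℝ) + dH := by
    have : (0:ℝ) ≤ dG := Nat.cast_nonneg dG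
    linarith
  rw [Fintype.sum_prod_type]
  rw [Finset.sum_congr rfl (fun u _ => Finset.sum_congr rfl
    (fun v _ => mu_lem G H dG dH hG hH x y' u v))]
  rw [Finset.sum_congr rfl (fun u _ => Finset.sum_add_distrib)]
  rw [Finset.sum_add_distrib]
  have e1 : ∑ u : α, ∑ v : β, (if G.Adj x u ∧ v = y' then 1 / ((dG:ℝ) + dH) else 0)
      = (dG : ℝ) / ((dG:ℝ) + dH) := by
    rw [Finset.sum_congr rfl (fun u _ => collapse_and (G.Adj x u) _ y'),
      cnt_lem G dG hG x]
    ring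
  have e2 : ∑ u : α, ∑ v : β, (if u = x ∧ H.Adj y' v then 1 / ((dG:ℝ) + dH) else 0)
      = (dH : ℝ) / ((dG:ℝ) + dH) := by
    have h1 : ∀ u : α, ∑ v : β, (if u = x ∧ H.Adj y' v then 1 / ((dG:ℝ) + dH) else 0)
        = if u = x then (dH : ℝ) * (1 / ((dG:ℝ) + dH)) else 0 := by
      intro u
      by_cases hu : u = x
      · simp only [hu, true_and]
        rw [cnt_lem H dH hH y']
        simp
      · simp [hu]
    rw [Finset.sum_congr rfl (fun u _ => h1 u), Finset.sum_ite_eq' Finset.univ x]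
    simp only [Finset.mem_univ, if_true]
    ring
  rw [e1, e2]
  field_simp
-- ===== collapse helpers for product sums =====

lemma collapse_xx [Fintype α] [Fintype β] (x : α) (F : (α × β) → (α × β) → ℝ) (T : β → β → ℝ) :
    (∑ p : α × β, ∑ q : α × β, F p q * (if p.1 = x ∧ q.1 = x then T p.2 q.2 else 0))
      = ∑ v1, ∑ v2, F (x, v1) (x, v2) * T v1 v2 := by
  rw [Fintype.sum_prod_type]
  rw [Finset.sum_eq_single_of_mem x (Finset.mem_univ x) (fun u1 _ hu1 =>
    Finset.sum_eq_zero fun v1 _ => Finset.sum_eq_zero fun q _ => by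
      rw [if_neg (fun h => hu1 h.1), mul_zero])]
  refine Finset.sum_congr rfl fun v1 _ => ?_
  rw [Fintype.sum_prod_type]
  rw [Finset.sum_eq_single_of_mem x (Finset.mem_univ x) (fun u2 _ hu2 =>
    Finset.sum_eq_zero fun v2 _ => by rw [if_neg (fun h => hu2 h.2), mul_zero])]
  refine Finset.sum_congr rfl fun v2 _ => ?_
  rw [if_pos ⟨rfl, rfl⟩]

lemma collapse_diag [Fintype α] [Fintype β] (x : α) (y1 y2 : β) (P : α → Prop)
    (F : (α × β) → (α × β) → ℝ) (c : ℝ) :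
    (∑ p : α × β, ∑ q : α × β,
        F p q * (if q.1 = p.1 ∧ P p.1 ∧ p.2 = y1 ∧ q.2 = y2 then c else 0))
      = ∑ u, if P u then F (u, y1) (u, y2) * c else 0 := by
  rw [Fintype.sum_prod_type]
  refine Finset.sum_congr rfl fun u1 _ => ?_
  rw [Finset.sum_eq_single_of_mem y1 (Finset.mem_univ y1) (fun v1 _ hv1 =>
    Finset.sum_eq_zero fun q _ => by rw [if_neg (fun h => hv1 h.2.2.1), mul_zero])]
  rw [Fintype.sum_prod_type]
  rw [Finset.sum_eq_single_of_mem u1 (Finset.mem_univ u1) (fun u2 _ hu2 =>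
    Finset.sum_eq_zero fun v2 _ => by rw [if_neg (fun h => hu2 h.1), mul_zero])]
  rw [Finset.sum_eq_single_of_mem y2 (Finset.mem_univ y2) (fun v2 _ hv2 => by
    rw [if_neg (fun h => hv2 h.2.2.2), mul_zero])]
  by_cases hP : P u1
  · rw [if_pos ⟨rfl, hP, rfl, rfl⟩, if_pos hP]
  · rw [if_neg (fun h => hP h.2.1), if_neg hP, mul_zero]

-- ===== upper bound =====

lemma UB_lem [Fintype α] [Fintype β] (G : SimpleGraph α) (H : SimpleGraph β)
    (dG dH : ℕ) (hG : G.IsRegularOfDegree dG) (hH : H.IsRegularOfDegree dH)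
    (x : α) (y1 y2 : β) (hy : H.Adj y1 y2) :
    Wass (G.boxProd H) (muMeas (G.boxProd H) 0 (x, y1)) (muMeas (G.boxProd H) 0 (x, y2))
      ≤ (dG : ℝ) / ((dG:ℝ) + dH)
        + (dH : ℝ) / ((dG:ℝ) + dH) * Wass H (muMeas H 0 y1) (muMeas H 0 y2) := by
  have hdH : 0 < dH := by
    rw [← hH y1]
    exact (SimpleGraph.degree_pos_iff_exists_adj _ _).mpr ⟨y2, hy⟩
  have hdHR : (0:ℝ) < dH := by exact_mod_cast hdH
  have hs0 : (0:ℝ) < (dG:ℝ) + dH := by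
    have : (0:ℝ) ≤ dG := Nat.cast_nonneg dG
    linarith
  have hsne : ((dG:ℝ) + dH) ≠ 0 := ne_of_gt hs0
  have hdne : (dH:ℝ) ≠ 0 := ne_of_gt hdHR
  have hratio : (0:ℝ) < (dH:ℝ) / ((dG:ℝ) + dH) := div_pos hdHR hs0
  have key : ∀ c ∈ WSet H (muMeas H 0 y1) (muMeas H 0 y2),
      Wass (G.boxProd H) (muMeas (G.boxProd H) 0 (x, y1)) (muMeas (G.boxProd H) 0 (x, y2))
        ≤ (dG:ℝ)/((dG:ℝ)+dH) + (dH:ℝ)/((dG:ℝ)+dH) * c := by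
    rintro c ⟨τ, hτ0, hτrow, hτcol, rfl⟩
    have hτrow' : ∀ u, ∑ v, τ u v = muMeas H 0 y1 u := fun u => by
      rw [← tsum_fintype (L := .unconditional _)]; exact hτrow u
    have hτcol' : ∀ v, ∑ u, τ u v = muMeas H 0 y2 v := fun v => by
      rw [← tsum_fintype (L := .unconditional _)]; exact hτcol v
    set κ : (α × β) → (α × β) → ℝ := fun p q =>
      (if p.1 = x ∧ q.1 = x then (dH:ℝ)/((dG:ℝ)+dH) * τ p.2 q.2 else 0) +
      (if q.1 = p.1 ∧ G.Adj x p.1 ∧ p.2 = y1 ∧ q.2 = y2 then 1/((dG:ℝ)+dH) else 0) with hκdef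
    have hκ0 : ∀ p q, 0 ≤ κ p q := by
      intro p q
      simp only [hκdef]
      refine add_nonneg ?_ ?_
      · split
        · exact mul_nonneg (le_of_lt hratio) (hτ0 _ _)
        · exact le_refl 0
      · split
        · positivity
        · exact le_refl 0
    have hκrow : ∀ p, ∑ q, κ p q = muMeas (G.boxProd H) 0 (x, y1) p := by
      rintro ⟨u, v⟩
      have hbody : ∀ q : α × β, κ (u, v) q =
          (if u = x ∧ q.1 = x then (dH:ℝ)/((dG:ℝ)+dH) * τ v q.2 else 0) +
          (if q.1 = u ∧ G.Adj x u ∧ v = y1 ∧ q.2 = y2 then 1/((dG:ℝ)+dH) else 0) := by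
        intro q; simp only [hκdef]
      have hA : (∑ q : α × β, (if u = x ∧ q.1 = x then (dH:ℝ)/((dG:ℝ)+dH) * τ v q.2 else 0))
          = if u = x ∧ H.Adj y1 v then 1/((dG:ℝ)+dH) else 0 := by
        by_cases hu : u = x
        · have e1 : ∀ q : α × β,
              (if u = x ∧ q.1 = x then (dH:ℝ)/((dG:ℝ)+dH) * τ v q.2 else 0)
                = if q.1 = x then (dH:ℝ)/((dG:ℝ)+dH) * τ v q.2 else 0 := by
            intro q
            by_cases h : q.1 = x
            · rw [if_pos ⟨hu, h⟩, if_pos h]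
            · rw [if_neg (fun hh => h hh.2), if_neg h]
          rw [Finset.sum_congr rfl fun q _ => e1 q, Fintype.sum_prod_type]
          rw [Finset.sum_eq_single_of_mem x (Finset.mem_univ x) (fun u2 _ hu2 =>
            Finset.sum_eq_zero fun v2 _ => if_neg hu2)]
          have e2 : ∀ v2 : β, (if (x:α) = x then (dH:ℝ)/((dG:ℝ)+dH) * τ v v2 else 0)
              = (dH:ℝ)/((dG:ℝ)+dH) * τ v v2 := fun v2 => if_pos rfl
          rw [Finset.sum_congr rfl fun v2 _ => e2 v2, ← Finset.mul_sum, hτrow' v,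
            nu_lem H dH hH y1 v]
          by_cases hv : H.Adj y1 v
          · rw [if_pos hv, if_pos ⟨hu, hv⟩]
            field_simp
            try ring
          · rw [if_neg hv, if_neg (fun h => hv h.2), mul_zero]
        · have e1 : ∀ q : α × β,
              (if u = x ∧ q.1 = x then (dH:ℝ)/((dG:ℝ)+dH) * τ v q.2 else 0) = 0 :=
            fun q => if_neg (fun h => hu h.1)
          rw [Finset.sum_congr rfl fun q _ => e1 q, Finset.sum_const_zero,
            if_neg (fun h : u = x ∧ H.Adj y1 v => hu h.1)]
      have hB : (∑ q : α × β,
            (if q.1 = u ∧ G.Adj x u ∧ v = y1 ∧ q.2 = y2 then 1/((dG:ℝ)+dH) else 0))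
          = if G.Adj x u ∧ v = y1 then 1/((dG:ℝ)+dH) else 0 := by
        by_cases hC : G.Adj x u ∧ v = y1
        · have e1 : ∀ q : α × β,
              (if q.1 = u ∧ G.Adj x u ∧ v = y1 ∧ q.2 = y2 then 1/((dG:ℝ)+dH) else 0)
                = if q = (u, y2) then 1/((dG:ℝ)+dH) else 0 := by
            intro q
            by_cases h : q = (u, y2)
            · subst h
              rw [if_pos ⟨rfl, hC.1, hC.2, rfl⟩, if_pos rfl]
            · rw [if_neg, if_neg h]
              rintro ⟨ha, -, -, hb⟩
              exact h (Prod.ext ha hb)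
          rw [Finset.sum_congr rfl fun q _ => e1 q, Finset.sum_ite_eq' Finset.univ (u, y2)]
          simp only [Finset.mem_univ, if_true]
          rw [if_pos hC]
        · have e1 : ∀ q : α × β,
              (if q.1 = u ∧ G.Adj x u ∧ v = y1 ∧ q.2 = y2 then 1/((dG:ℝ)+dH) else 0) = 0 :=
            fun q => if_neg (fun h => hC ⟨h.2.1, h.2.2.1⟩)
          rw [Finset.sum_congr rfl fun q _ => e1 q, Finset.sum_const_zero, if_neg hC]
      rw [Finset.sum_congr rfl fun q _ => hbody q, Finset.sum_add_distrib, hA, hB,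
        mu_lem G H dG dH hG hH x y1 u v, add_comm]
    have hκcol : ∀ q, ∑ p, κ p q = muMeas (G.boxProd H) 0 (x, y2) q := by
      rintro ⟨u, v⟩
      have hbody : ∀ p : α × β, κ p (u, v) =
          (if p.1 = x ∧ u = x then (dH:ℝ)/((dG:ℝ)+dH) * τ p.2 v else 0) +
          (if u = p.1 ∧ G.Adj x p.1 ∧ p.2 = y1 ∧ v = y2 then 1/((dG:ℝ)+dH) else 0) := by
        intro p; simp only [hκdef]
      have hA : (∑ p : α × β, (if p.1 = x ∧ u = x then (dH:ℝ)/((dG:ℝ)+dH) * τ p.2 v else 0))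
          = if u = x ∧ H.Adj y2 v then 1/((dG:ℝ)+dH) else 0 := by
        by_cases hu : u = x
        · have e1 : ∀ p : α × β,
              (if p.1 = x ∧ u = x then (dH:ℝ)/((dG:ℝ)+dH) * τ p.2 v else 0)
                = if p.1 = x then (dH:ℝ)/((dG:ℝ)+dH) * τ p.2 v else 0 := by
            intro p
            by_cases h : p.1 = x
            · rw [if_pos ⟨h, hu⟩, if_pos h]
            · rw [if_neg (fun hh => h hh.1), if_neg h]
          rw [Finset.sum_congr rfl fun p _ => e1 p, Fintype.sum_prod_type]
          rw [Finset.sum_eq_single_of_mem x (Finset.mem_univ x) (fun u1 _ hu1 =>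
            Finset.sum_eq_zero fun v1 _ => if_neg hu1)]
          have e2 : ∀ v1 : β, (if (x:α) = x then (dH:ℝ)/((dG:ℝ)+dH) * τ v1 v else 0)
              = (dH:ℝ)/((dG:ℝ)+dH) * τ v1 v := fun v1 => if_pos rfl
          rw [Finset.sum_congr rfl fun v1 _ => e2 v1, ← Finset.mul_sum, hτcol' v,
            nu_lem H dH hH y2 v]
          by_cases hv : H.Adj y2 v
          · rw [if_pos hv, if_pos ⟨hu, hv⟩]
            field_simp
            try ring
          · rw [if_neg hv, if_neg (fun h => hv h.2), mul_zero]
        · have e1 : ∀ p : α × β,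
              (if p.1 = x ∧ u = x then (dH:ℝ)/((dG:ℝ)+dH) * τ p.2 v else 0) = 0 :=
            fun p => if_neg (fun h => hu h.2)
          rw [Finset.sum_congr rfl fun p _ => e1 p, Finset.sum_const_zero,
            if_neg (fun h : u = x ∧ H.Adj y2 v => hu h.1)]
      have hB : (∑ p : α × β,
            (if u = p.1 ∧ G.Adj x p.1 ∧ p.2 = y1 ∧ v = y2 then 1/((dG:ℝ)+dH) else 0))
          = if G.Adj x u ∧ v = y2 then 1/((dG:ℝ)+dH) else 0 := by
        by_cases hC : G.Adj x u ∧ v = y2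
        · have e1 : ∀ p : α × β,
              (if u = p.1 ∧ G.Adj x p.1 ∧ p.2 = y1 ∧ v = y2 then 1/((dG:ℝ)+dH) else 0)
                = if p = (u, y1) then 1/((dG:ℝ)+dH) else 0 := by
            intro p
            by_cases h : p = (u, y1)
            · subst h
              rw [if_pos ⟨rfl, hC.1, rfl, hC.2⟩, if_pos rfl]
            · rw [if_neg, if_neg h]
              rintro ⟨ha, -, hb, -⟩
              exact h (Prod.ext ha.symm hb)
          rw [Finset.sum_congr rfl fun p _ => e1 p, Finset.sum_ite_eq' Finset.univ (u, y1)]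
          simp only [Finset.mem_univ, if_true]
          rw [if_pos hC]
        · have e1 : ∀ p : α × β,
              (if u = p.1 ∧ G.Adj x p.1 ∧ p.2 = y1 ∧ v = y2 then 1/((dG:ℝ)+dH) else 0) = 0 := by
            intro p
            refine if_neg ?_
            rintro ⟨h1, h2, -, h4⟩
            rw [← h1] at h2
            exact hC ⟨h2, h4⟩
          rw [Finset.sum_congr rfl fun p _ => e1 p, Finset.sum_const_zero, if_neg hC]
      rw [Finset.sum_congr rfl fun p _ => hbody p, Finset.sum_add_distrib, hA, hB,
        mu_lem G H dG dH hG hH x y2 u v, add_comm]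
    refine (Wass_le κ hκ0 hκrow hκcol).trans ?_
    have hsplit : ∑ p : α × β, ∑ q : α × β, ((G.boxProd H).dist p q : ℝ) * κ p q
        = (∑ p : α × β, ∑ q : α × β, ((G.boxProd H).dist p q : ℝ) *
            (if p.1 = x ∧ q.1 = x then (dH:ℝ)/((dG:ℝ)+dH) * τ p.2 q.2 else 0))
          + ∑ p : α × β, ∑ q : α × β, ((G.boxProd H).dist p q : ℝ) *
            (if q.1 = p.1 ∧ G.Adj x p.1 ∧ p.2 = y1 ∧ q.2 = y2 then 1/((dG:ℝ)+dH) else 0) := by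
      rw [← Finset.sum_add_distrib]
      refine Finset.sum_congr rfl fun p _ => ?_
      rw [← Finset.sum_add_distrib]
      refine Finset.sum_congr rfl fun q _ => ?_
      simp only [hκdef]
      ring
    have hcx : (∑ p : α × β, ∑ q : α × β, ((G.boxProd H).dist p q : ℝ) *
          (if p.1 = x ∧ q.1 = x then (dH:ℝ)/((dG:ℝ)+dH) * τ p.2 q.2 else 0))
        = ∑ v1, ∑ v2, ((G.boxProd H).dist (x, v1) (x, v2) : ℝ) *
          ((dH:ℝ)/((dG:ℝ)+dH) * τ v1 v2) :=
      collapse_xx x (fun p q => ((G.boxProd H).dist p q : ℝ))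
        (fun v1 v2 => (dH:ℝ)/((dG:ℝ)+dH) * τ v1 v2)
    have hcd : (∑ p : α × β, ∑ q : α × β, ((G.boxProd H).dist p q : ℝ) *
          (if q.1 = p.1 ∧ G.Adj x p.1 ∧ p.2 = y1 ∧ q.2 = y2 then 1/((dG:ℝ)+dH) else 0))
        = ∑ u, if G.Adj x u then
            ((G.boxProd H).dist (u, y1) (u, y2) : ℝ) * (1/((dG:ℝ)+dH)) else 0 :=
      collapse_diag x y1 y2 (G.Adj x) (fun p q => ((G.boxProd H).dist p q : ℝ))
        (1/((dG:ℝ)+dH))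
    rw [hsplit, hcx, hcd]
    have hb1 : ∑ v1, ∑ v2, ((G.boxProd H).dist (x, v1) (x, v2) : ℝ) *
        ((dH:ℝ)/((dG:ℝ)+dH) * τ v1 v2)
        ≤ (dH:ℝ)/((dG:ℝ)+dH) * ∑ v1, ∑ v2, (H.dist v1 v2 : ℝ) * τ v1 v2 := by
      rw [Finset.mul_sum]
      refine Finset.sum_le_sum fun v1 _ => ?_
      rw [Finset.mul_sum]
      refine Finset.sum_le_sum fun v2 _ => ?_
      have hd : ((G.boxProd H).dist (x, v1) (x, v2) : ℝ) ≤ (H.dist v1 v2 : ℝ) := by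
        exact_mod_cast boxDist_right_le x v1 v2
      calc ((G.boxProd H).dist (x, v1) (x, v2) : ℝ) * ((dH:ℝ)/((dG:ℝ)+dH) * τ v1 v2)
          ≤ (H.dist v1 v2 : ℝ) * ((dH:ℝ)/((dG:ℝ)+dH) * τ v1 v2) := by
            refine mul_le_mul_of_nonneg_right hd ?_
            exact mul_nonneg (le_of_lt hratio) (hτ0 _ _)
        _ = (dH:ℝ)/((dG:ℝ)+dH) * ((H.dist v1 v2 : ℝ) * τ v1 v2) := by ring
    have hb2 : ∑ u, (if G.Adj x u then
          ((G.boxProd H).dist (u, y1) (u, y2) : ℝ) * (1/((dG:ℝ)+dH)) else 0)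
        ≤ (dG:ℝ)/((dG:ℝ)+dH) := by
      have e3 : ∀ u, (if G.Adj x u then
            ((G.boxProd H).dist (u, y1) (u, y2) : ℝ) * (1/((dG:ℝ)+dH)) else 0)
          ≤ (if G.Adj x u then 1/((dG:ℝ)+dH) else 0) := by
        intro u
        by_cases h : G.Adj x u
        · rw [if_pos h, if_pos h]
          have hd : ((G.boxProd H).dist (u, y1) (u, y2) : ℝ) ≤ 1 := by
            have h1 : (G.boxProd H).dist (u, y1) (u, y2) ≤ H.dist y1 y2 :=
              boxDist_right_le u y1 y2
            have h2 : H.dist y1 y2 = 1 := SimpleGraph.dist_eq_one_iff_adj.mpr hy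
            rw [h2] at h1
            exact_mod_cast h1
          calc ((G.boxProd H).dist (u, y1) (u, y2) : ℝ) * (1/((dG:ℝ)+dH))
              ≤ 1 * (1/((dG:ℝ)+dH)) := by
                refine mul_le_mul_of_nonneg_right hd (by positivity)
            _ = 1/((dG:ℝ)+dH) := one_mul _
        · rw [if_neg h, if_neg h]
      calc ∑ u, (if G.Adj x u then
            ((G.boxProd H).dist (u, y1) (u, y2) : ℝ) * (1/((dG:ℝ)+dH)) else 0)
          ≤ ∑ u, (if G.Adj x u then 1/((dG:ℝ)+dH) else 0) :=
            Finset.sum_le_sum fun u _ => e3 u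
        _ = (dG:ℝ) * (1/((dG:ℝ)+dH)) := cnt_lem G dG hG x _
        _ = (dG:ℝ)/((dG:ℝ)+dH) := by ring
    rw [tsum_fintype]
    have hc2 : ∀ v1 : β, (∑' v2, (H.dist v1 v2 : ℝ) * τ v1 v2)
        = ∑ v2, (H.dist v1 v2 : ℝ) * τ v1 v2 := fun v1 => tsum_fintype _
    rw [Finset.sum_congr rfl fun v1 _ => hc2 v1]
    linarith [hb1, hb2]
  have SHne : (WSet H (muMeas H 0 y1) (muMeas H 0 y2)).Nonempty := by
    refine WSet_nonempty (fun v => ?_) (fun v => ?_)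
      (nusum_lem H dH hH hdH y1) (nusum_lem H dH hH hdH y2)
    · rw [nu_lem H dH hH y1 v]; split
      · positivity
      · exact le_refl 0
    · rw [nu_lem H dH hH y2 v]; split
      · positivity
      · exact le_refl 0
  have h2 : ∀ c ∈ WSet H (muMeas H 0 y1) (muMeas H 0 y2),
      (Wass (G.boxProd H) (muMeas (G.boxProd H) 0 (x, y1)) (muMeas (G.boxProd H) 0 (x, y2))
        - (dG:ℝ)/((dG:ℝ)+dH)) / ((dH:ℝ)/((dG:ℝ)+dH)) ≤ c := by
    intro c hc
    rw [div_le_iff₀ hratio]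
    have hk := key c hc
    have hcm : c * ((dH:ℝ)/((dG:ℝ)+dH)) = (dH:ℝ)/((dG:ℝ)+dH) * c := mul_comm _ _
    linarith
  have h3 := le_csInf SHne h2
  rw [← Wass_eq_sInf] at h3
  rw [div_le_iff₀ hratio] at h3
  have hcm : Wass H (muMeas H 0 y1) (muMeas H 0 y2) * ((dH:ℝ)/((dG:ℝ)+dH))
      = (dH:ℝ)/((dG:ℝ)+dH) * Wass H (muMeas H 0 y1) (muMeas H 0 y2) := mul_comm _ _
  linarith
-- ===== lower bound =====

lemma LB_lem [Fintype α] [Fintype β] (G : SimpleGraph α) (H : SimpleGraph β)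
    (dG dH : ℕ) (hG : G.IsRegularOfDegree dG) (hH : H.IsRegularOfDegree dH)
    (x : α) (y1 y2 : β) (hy : H.Adj y1 y2) :
    (dG : ℝ) / ((dG:ℝ) + dH)
      + (dH : ℝ) / ((dG:ℝ) + dH) * Wass H (muMeas H 0 y1) (muMeas H 0 y2)
      ≤ Wass (G.boxProd H) (muMeas (G.boxProd H) 0 (x, y1)) (muMeas (G.boxProd H) 0 (x, y2)) := by
  have hdH : 0 < dH := by
    rw [← hH y1]
    exact (SimpleGraph.degree_pos_iff_exists_adj _ _).mpr ⟨y2, hy⟩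
  have hdHR : (0:ℝ) < dH := by exact_mod_cast hdH
  have hs0 : (0:ℝ) < (dG:ℝ) + dH := by
    have : (0:ℝ) ≤ dG := Nat.cast_nonneg dG
    linarith
  have hsne : ((dG:ℝ) + dH) ≠ 0 := ne_of_gt hs0
  have hdne : (dH:ℝ) ≠ 0 := ne_of_gt hdHR
  have hμnn : ∀ (y' : β) (p : α × β), 0 ≤ muMeas (G.boxProd H) 0 (x, y') p := by
    rintro y' ⟨u, v⟩
    rw [mu_lem G H dG dH hG hH x y' u v]
    have h1 : (0:ℝ) ≤ 1 / ((dG:ℝ) + dH) := by positivity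
    refine add_nonneg ?_ ?_ <;> split
    all_goals first | exact h1 | exact le_refl 0
  refine le_Wass (WSet_nonempty (hμnn y1) (hμnn y2)
    (musum_lem G H dG dH hG hH hdH x y1) (musum_lem G H dG dH hG hH hdH x y2)) ?_
  rintro c ⟨π, h0, hrow, hcol, rfl⟩
  have hrow' : ∀ p, ∑ q, π p q = muMeas (G.boxProd H) 0 (x, y1) p := fun p => by
    rw [← tsum_fintype (L := .unconditional _)]; exact hrow p
  have hcol' : ∀ q, ∑ p, π p q = muMeas (G.boxProd H) 0 (x, y2) q := fun q => by
    rw [← tsum_fintype (L := .unconditional _)]; exact hcol q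
  have Z1 : ∀ u v, ¬((G.Adj x u ∧ v = y1) ∨ (u = x ∧ H.Adj y1 v)) → ∀ q, π (u, v) q = 0 := by
    intro u v h q
    have hz : muMeas (G.boxProd H) 0 (x, y1) (u, v) = 0 := by
      rw [mu_lem G H dG dH hG hH x y1 u v, if_neg (fun hh => h (Or.inl hh)),
        if_neg (fun hh => h (Or.inr hh)), add_zero]
    have hsum := hrow' (u, v)
    rw [hz] at hsum
    exact (Finset.sum_eq_zero_iff_of_nonneg (fun q _ => h0 (u, v) q)).mp hsum q (Finset.mem_univ q)
  have Z2 : ∀ u v, ¬((G.Adj x u ∧ v = y2) ∨ (u = x ∧ H.Adj y2 v)) → ∀ p, π p (u, v) = 0 := by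
    intro u v h p
    have hz : muMeas (G.boxProd H) 0 (x, y2) (u, v) = 0 := by
      rw [mu_lem G H dG dH hG hH x y2 u v, if_neg (fun hh => h (Or.inl hh)),
        if_neg (fun hh => h (Or.inr hh)), add_zero]
    have hsum := hcol' (u, v)
    rw [hz] at hsum
    exact (Finset.sum_eq_zero_iff_of_nonneg (fun p _ => h0 p (u, v))).mp hsum p (Finset.mem_univ p)
  have supp1 : ∀ {u v} (q : α × β), π (u, v) q ≠ 0 →
      (G.Adj x u ∧ v = y1) ∨ (u = x ∧ H.Adj y1 v) := by
    intro u v q hne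
    by_contra hcon
    exact hne (Z1 u v hcon q)
  have supp2 : ∀ (p : α × β) {u v}, π p (u, v) ≠ 0 →
      (G.Adj x u ∧ v = y2) ∨ (u = x ∧ H.Adj y2 v) := by
    intro p u v hne
    by_contra hcon
    exact hne (Z2 u v hcon p)
  -- pieces of the transport plan
  set f : β → ℝ := fun b1 => ∑ u ∈ Finset.univ.erase x, π (x, b1) (u, y2) with hfdef
  set g : β → ℝ := fun b2 => ∑ u ∈ Finset.univ.erase x, π (u, y1) (x, b2) with hgdef
  set a : ℝ := ∑ b1, f b1 with hadef
  have hf0 : ∀ b1, 0 ≤ f b1 := fun b1 => by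
    simp only [hfdef]; exact Finset.sum_nonneg fun u _ => h0 _ _
  have hg0 : ∀ b2, 0 ≤ g b2 := fun b2 => by
    simp only [hgdef]; exact Finset.sum_nonneg fun u _ => h0 _ _
  have ha0 : 0 ≤ a := by
    rw [hadef]; exact Finset.sum_nonneg fun b1 _ => hf0 b1
  have hfadj : ∀ b1, f b1 ≠ 0 → H.Adj y1 b1 := by
    intro b1 hne
    simp only [hfdef] at hne
    obtain ⟨u, hu, hπ⟩ := Finset.exists_ne_zero_of_sum_ne_zero hne
    rcases supp1 _ hπ with ⟨ha, -⟩ | ⟨-, hb⟩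
    · exact absurd ha G.irrefl
    · exact hb
  have hgadj : ∀ b2, g b2 ≠ 0 → H.Adj y2 b2 := by
    intro b2 hne
    simp only [hgdef] at hne
    obtain ⟨u, hu, hπ⟩ := Finset.exists_ne_zero_of_sum_ne_zero hne
    rcases supp2 _ hπ with ⟨ha, -⟩ | ⟨-, hb⟩
    · exact absurd ha G.irrefl
    · exact hb
  -- row and column identities
  have hrowid : ∀ b1, (∑ b2, π (x, b1) (x, b2)) + f b1
      = muMeas (G.boxProd H) 0 (x, y1) (x, b1) := by
    intro b1
    have h1 : ∑ q : α × β, π (x, b1) q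
        = (∑ v, π (x, b1) (x, v)) + ∑ u ∈ Finset.univ.erase x, ∑ v, π (x, b1) (u, v) := by
      rw [Fintype.sum_prod_type]
      exact (Finset.add_sum_erase _ _ (Finset.mem_univ x)).symm
    have h2 : ∀ u ∈ Finset.univ.erase x, (∑ v, π (x, b1) (u, v)) = π (x, b1) (u, y2) := by
      intro u hu
      have hux : u ≠ x := Finset.ne_of_mem_erase hu
      refine Finset.sum_eq_single y2 (fun v _ hv => ?_) (fun h => absurd (Finset.mem_univ _) h)
      refine Z2 u v ?_ _
      rintro (⟨-, hv2⟩ | ⟨hux2, -⟩)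
      · exact hv hv2
      · exact hux hux2
    rw [← hrow' (x, b1), h1, Finset.sum_congr rfl h2]
  have hcolid : ∀ b2, (∑ b1, π (x, b1) (x, b2)) + g b2
      = muMeas (G.boxProd H) 0 (x, y2) (x, b2) := by
    intro b2
    have h1 : ∑ p : α × β, π p (x, b2)
        = (∑ v, π (x, v) (x, b2)) + ∑ u ∈ Finset.univ.erase x, ∑ v, π (u, v) (x, b2) := by
      rw [Fintype.sum_prod_type]
      exact (Finset.add_sum_erase _ _ (Finset.mem_univ x)).symm
    have h2 : ∀ u ∈ Finset.univ.erase x, (∑ v, π (u, v) (x, b2)) = π (u, y1) (x, b2) := by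
      intro u hu
      have hux : u ≠ x := Finset.ne_of_mem_erase hu
      refine Finset.sum_eq_single y1 (fun v _ hv => ?_) (fun h => absurd (Finset.mem_univ _) h)
      refine Z1 u v ?_ _
      rintro (⟨-, hv2⟩ | ⟨hux2, -⟩)
      · exact hv hv2
      · exact hux hux2
    rw [← hcol' (x, b2), h1, Finset.sum_congr rfl h2]
  -- mass計算
  have hmux : ∀ (y' : β) (b : β), muMeas (G.boxProd H) 0 (x, y') (x, b)
      = if H.Adj y' b then 1/((dG:ℝ)+dH) else 0 := by
    intro y' b
    rw [mu_lem G H dG dH hG hH x y' x b, if_neg (fun h => G.irrefl h.1), zero_add]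
    by_cases hb : H.Adj y' b
    · rw [if_pos ⟨rfl, hb⟩, if_pos hb]
    · rw [if_neg (fun h => hb h.2), if_neg hb]
  have hmassx : ∀ y' : β, ∑ b, muMeas (G.boxProd H) 0 (x, y') (x, b)
      = (dH:ℝ) / ((dG:ℝ) + dH) := by
    intro y'
    rw [Finset.sum_congr rfl fun b _ => hmux y' b, cnt_lem H dH hH y']
    ring
  have htt_a : (∑ b1, ∑ b2, π (x, b1) (x, b2)) + a = (dH:ℝ) / ((dG:ℝ) + dH) := by
    rw [hadef, ← Finset.sum_add_distrib,
      Finset.sum_congr rfl fun b1 _ => hrowid b1]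
    exact hmassx y1
  have hga : ∑ b2, g b2 = a := by
    have h1 : (∑ b2, ∑ b1, π (x, b1) (x, b2)) + ∑ b2, g b2 = (dH:ℝ) / ((dG:ℝ) + dH) := by
      rw [← Finset.sum_add_distrib, Finset.sum_congr rfl fun b2 _ => hcolid b2]
      exact hmassx y2
    have h2 : ∑ b2, ∑ b1, π (x, b1) (x, b2) = ∑ b1, ∑ b2, π (x, b1) (x, b2) :=
      Finset.sum_comm
    rw [h2] at h1
    linarith [htt_a]
  have hfz : a = 0 → ∀ b1, f b1 = 0 := by
    intro haz b1
    have hsz : ∑ b1, f b1 = 0 := by rw [← hadef]; exact haz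
    exact (Finset.sum_eq_zero_iff_of_nonneg fun b _ => hf0 b).mp hsz b1 (Finset.mem_univ b1)
  have hgz : a = 0 → ∀ b2, g b2 = 0 := by
    intro haz b2
    have hsz : ∑ b2, g b2 = 0 := by rw [hga]; exact haz
    exact (Finset.sum_eq_zero_iff_of_nonneg fun b _ => hg0 b).mp hsz b2 (Finset.mem_univ b2)
  have hdiva : ∀ r : ℝ, (a = 0 → r = 0) → r * a / a = r := by
    intro r h
    by_cases haz : a = 0
    · rw [haz, h haz]; simp
    · field_simp
  -- the induced H-coupling
  set πH : β → β → ℝ := fun b1 b2 =>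
    ((dG:ℝ) + dH) / dH * (π (x, b1) (x, b2) + f b1 * g b2 / a) with hπHdef
  have hπH0 : ∀ b1 b2, 0 ≤ πH b1 b2 := by
    intro b1 b2
    simp only [hπHdef]
    have h1 : (0:ℝ) ≤ ((dG:ℝ)+dH)/dH := by positivity
    exact mul_nonneg h1 (add_nonneg (h0 _ _)
      (div_nonneg (mul_nonneg (hf0 b1) (hg0 b2)) ha0))
  have hπHrow : ∀ b1, ∑ b2, πH b1 b2 = muMeas H 0 y1 b1 := by
    intro b1
    have e1 : ∑ b2, πH b1 b2
        = ((dG:ℝ)+dH)/dH * ((∑ b2, π (x, b1) (x, b2)) + f b1 * a / a) := by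
      simp only [hπHdef]
      rw [← Finset.mul_sum]
      congr 1
      rw [Finset.sum_add_distrib]
      congr 1
      have h3 : ∀ b2, f b1 * g b2 / a = f b1 / a * g b2 := fun b2 => by ring
      rw [Finset.sum_congr rfl fun b2 _ => h3 b2, ← Finset.mul_sum, hga]
      ring
    rw [e1, hdiva (f b1) (fun haz => hfz haz b1), hrowid b1, hmux y1 b1,
      nu_lem H dH hH y1 b1]
    by_cases hb : H.Adj y1 b1
    · rw [if_pos hb, if_pos hb]
      field_simp
    · rw [if_neg hb, if_neg hb, mul_zero]
  have hπHcol : ∀ b2, ∑ b1, πH b1 b2 = muMeas H 0 y2 b2 := by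
    intro b2
    have e1 : ∑ b1, πH b1 b2
        = ((dG:ℝ)+dH)/dH * ((∑ b1, π (x, b1) (x, b2)) + g b2 * a / a) := by
      simp only [hπHdef]
      rw [← Finset.mul_sum]
      congr 1
      rw [Finset.sum_add_distrib]
      congr 1
      have h3 : ∀ b1, f b1 * g b2 / a = g b2 / a * f b1 := fun b1 => by ring
      rw [Finset.sum_congr rfl fun b1 _ => h3 b1, ← Finset.mul_sum, ← hadef]
      ring
    rw [e1, hdiva (g b2) (fun haz => hgz haz b2), hcolid b2, hmux y2 b2,
      nu_lem H dH hH y2 b2]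
    by_cases hb : H.Adj y2 b2
    · rw [if_pos hb, if_pos hb]
      field_simp
    · rw [if_neg hb, if_neg hb, mul_zero]
  -- cost of the H-coupling
  have hWH : Wass H (muMeas H 0 y1) (muMeas H 0 y2)
      ≤ ((dG:ℝ)+dH)/dH *
        ((∑ b1, ∑ b2, (H.dist b1 b2 : ℝ) * π (x, b1) (x, b2))
          + ((∑ b1, (H.dist b1 y2 : ℝ) * f b1) + a)) := by
    refine (Wass_le πH hπH0 hπHrow hπHcol).trans ?_
    have e1 : ∀ b1 b2, (H.dist b1 b2 : ℝ) * πH b1 b2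
        = ((dG:ℝ)+dH)/dH * ((H.dist b1 b2:ℝ) * π (x, b1) (x, b2))
          + ((dG:ℝ)+dH)/dH * ((H.dist b1 b2:ℝ) * (f b1 * g b2 / a)) := by
      intro b1 b2; simp only [hπHdef]; ring
    rw [Finset.sum_congr rfl fun b1 _ => Finset.sum_congr rfl fun b2 _ => e1 b1 b2]
    rw [Finset.sum_congr rfl fun b1 (_ : b1 ∈ Finset.univ) => Finset.sum_add_distrib,
      Finset.sum_add_distrib]
    have e2 : ∑ b1, ∑ b2, ((dG:ℝ)+dH)/dH * ((H.dist b1 b2:ℝ) * π (x, b1) (x, b2))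
        = ((dG:ℝ)+dH)/dH * ∑ b1, ∑ b2, (H.dist b1 b2:ℝ) * π (x, b1) (x, b2) := by
      rw [Finset.mul_sum]
      exact Finset.sum_congr rfl fun b1 _ => by rw [Finset.mul_sum]
    have hcross : ∑ b1, ∑ b2, ((dG:ℝ)+dH)/dH * ((H.dist b1 b2:ℝ) * (f b1 * g b2 / a))
        ≤ ((dG:ℝ)+dH)/dH * ((∑ b1, (H.dist b1 y2:ℝ) * f b1) + a) := by
      have t1 : ∀ b1 b2, (H.dist b1 b2:ℝ) * (f b1 * g b2 / a)
          ≤ ((H.dist b1 y2:ℝ) + 1) * (f b1 * g b2 / a) := by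
        intro b1 b2
        by_cases hfg : f b1 * g b2 = 0
        · rw [hfg, zero_div, mul_zero, mul_zero]
        · have hfa := hfadj b1 (left_ne_zero_of_mul hfg)
          have hgb := hgadj b2 (right_ne_zero_of_mul hfg)
          have htr : H.dist b1 b2 ≤ H.dist b1 y2 + 1 := by
            have t2 := dist_triangle_reachable
              (hfa.symm.reachable.trans hy.reachable) hgb.reachable
            have t3 : H.dist y2 b2 = 1 := SimpleGraph.dist_eq_one_iff_adj.mpr hgb
            omega
          have hc : ((H.dist b1 b2:ℝ)) ≤ (H.dist b1 y2:ℝ) + 1 := by exact_mod_cast htr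
          exact mul_le_mul_of_nonneg_right hc
            (div_nonneg (mul_nonneg (hf0 b1) (hg0 b2)) ha0)
      calc ∑ b1, ∑ b2, ((dG:ℝ)+dH)/dH * ((H.dist b1 b2:ℝ) * (f b1 * g b2 / a))
          ≤ ∑ b1, ∑ b2, ((dG:ℝ)+dH)/dH * (((H.dist b1 y2:ℝ)+1) * (f b1 * g b2 / a)) := by
            refine Finset.sum_le_sum fun b1 _ => Finset.sum_le_sum fun b2 _ => ?_
            exact mul_le_mul_of_nonneg_left (t1 b1 b2) (by positivity)
        _ = ∑ b1, ((dG:ℝ)+dH)/dH * (((H.dist b1 y2:ℝ)+1) * (f b1 * a / a)) := by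
            refine Finset.sum_congr rfl fun b1 _ => ?_
            have h3 : ∀ b2, ((dG:ℝ)+dH)/dH * (((H.dist b1 y2:ℝ)+1) * (f b1 * g b2 / a))
                = (((dG:ℝ)+dH)/dH * (((H.dist b1 y2:ℝ)+1) * (f b1 / a))) * g b2 :=
              fun b2 => by ring
            rw [Finset.sum_congr rfl fun b2 _ => h3 b2, ← Finset.mul_sum, hga]
            ring
        _ = ∑ b1, ((dG:ℝ)+dH)/dH * (((H.dist b1 y2:ℝ)+1) * f b1) := by
            refine Finset.sum_congr rfl fun b1 _ => ?_
            rw [hdiva (f b1) (fun hz => hfz hz b1)]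
        _ = ((dG:ℝ)+dH)/dH * ∑ b1, (((H.dist b1 y2:ℝ)+1) * f b1) := by
            rw [Finset.mul_sum]
        _ = ((dG:ℝ)+dH)/dH * ((∑ b1, (H.dist b1 y2:ℝ) * f b1) + a) := by
            have h4 : ∀ b1, ((H.dist b1 y2:ℝ)+1) * f b1
                = (H.dist b1 y2:ℝ) * f b1 + f b1 := fun b1 => by ring
            rw [Finset.sum_congr rfl fun b1 _ => h4 b1, Finset.sum_add_distrib, ← hadef]
    rw [e2, mul_add]
    exact add_le_add_right hcross _
  -- the comparison function L
  set L : (α × β) → (α × β) → ℝ := fun p q =>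
    if p.1 = x then
      (if q.1 = x then (H.dist p.2 q.2 : ℝ)
       else if q.2 = y2 then 1 + (H.dist p.2 y2 : ℝ) else 0)
    else 1 with hLdef
  have hterm : ∀ p q, L p q * π p q ≤ ((G.boxProd H).dist p q : ℝ) * π p q := by
    rintro ⟨u1, v1⟩ ⟨u2, v2⟩
    by_cases hz : π (u1, v1) (u2, v2) = 0
    · rw [hz, mul_zero, mul_zero]
    · have hp := supp1 _ hz
      have hq := supp2 _ hz
      refine mul_le_mul_of_nonneg_right ?_ (h0 _ _)
      have hLval : L (u1, v1) (u2, v2) = if u1 = x then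
          (if u2 = x then (H.dist v1 v2 : ℝ)
           else if v2 = y2 then 1 + (H.dist v1 y2 : ℝ) else 0) else 1 := by
        simp only [hLdef]
      rw [hLval]
      by_cases hu1 : u1 = x
      · rw [if_pos hu1]
        have hv1 : H.Adj y1 v1 := by
          rcases hp with ⟨ha, -⟩ | ⟨-, hb⟩
          · exact absurd (hu1 ▸ ha) G.irrefl
          · exact hb
        by_cases hu2 : u2 = x
        · rw [if_pos hu2]
          have hv2 : H.Adj y2 v2 := by
            rcases hq with ⟨ha, -⟩ | ⟨-, hb⟩
            · exact absurd (hu2 ▸ ha) G.irrefl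
            · exact hb
          have hrg : G.Reachable u1 u2 := by
            rw [hu1, hu2]
          have hrh : H.Reachable v1 v2 :=
            hv1.symm.reachable.trans (hy.reachable.trans hv2.reachable)
          have hd : G.dist u1 u2 + H.dist v1 v2 ≤ (G.boxProd H).dist (u1, v1) (u2, v2) :=
            boxDist_ge (boxProd_reachable hrg hrh)
          have hz : G.dist u1 u2 = 0 := by
            rw [hu1, hu2]
            exact SimpleGraph.dist_self
          have hfin : H.dist v1 v2 ≤ (G.boxProd H).dist (u1, v1) (u2, v2) := by omega
          exact_mod_cast hfin
        · rw [if_neg hu2]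
          have hq' : G.Adj x u2 ∧ v2 = y2 := by
            rcases hq with h | ⟨hc, -⟩
            · exact h
            · exact absurd hc hu2
          obtain ⟨hadj2, hv2e⟩ := hq'
          rw [if_pos hv2e]
          have hrg : G.Reachable u1 u2 := by
            rw [hu1]
            exact hadj2.reachable
          have hrh : H.Reachable v1 v2 := by
            rw [hv2e]
            exact hv1.symm.reachable.trans hy.reachable
          have hd : G.dist u1 u2 + H.dist v1 v2 ≤ (G.boxProd H).dist (u1, v1) (u2, v2) :=
            boxDist_ge (boxProd_reachable hrg hrh)
          have hdg : 1 ≤ G.dist u1 u2 := by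
            rw [hu1]
            exact hadj2.reachable.pos_dist_of_ne hadj2.ne
          have hdh : H.dist v1 y2 = H.dist v1 v2 := by rw [hv2e]
          have hfin : 1 + H.dist v1 y2 ≤ (G.boxProd H).dist (u1, v1) (u2, v2) := by omega
          exact_mod_cast hfin
      · rw [if_neg hu1]
        have hp' : G.Adj x u1 ∧ v1 = y1 := by
          rcases hp with h | ⟨hc, -⟩
          · exact h
          · exact absurd hc hu1
        obtain ⟨hadj1, hv1e⟩ := hp'
        rcases hq with ⟨hadj2, hv2e⟩ | ⟨hu2e, hadj2⟩
        · have hrg : G.Reachable u1 u2 := hadj1.symm.reachable.trans hadj2.reachable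
          have hrh : H.Reachable v1 v2 := by
            rw [hv1e, hv2e]
            exact hy.reachable
          have hne : ((u1, v1) : α × β) ≠ (u2, v2) := by
            intro h
            have h5 : v1 = v2 := congrArg Prod.snd h
            rw [hv1e, hv2e] at h5
            exact hy.ne h5
          have h1 : 1 ≤ (G.boxProd H).dist (u1, v1) (u2, v2) :=
            (boxProd_reachable hrg hrh).pos_dist_of_ne hne
          exact_mod_cast h1
        · have hrg : G.Reachable u1 u2 := by
            refine hadj1.symm.reachable.trans ?_
            rw [hu2e]
          have hrh : H.Reachable v1 v2 := by
            rw [hv1e]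
            exact hy.reachable.trans hadj2.reachable
          have hne : ((u1, v1) : α × β) ≠ (u2, v2) := by
            intro h
            have h5 : u1 = u2 := congrArg Prod.fst h
            rw [hu2e] at h5
            exact hu1 h5
          have h1 : 1 ≤ (G.boxProd H).dist (u1, v1) (u2, v2) :=
            (boxProd_reachable hrg hrh).pos_dist_of_ne hne
          exact_mod_cast h1
  -- the sum of L π
  have hLsum : ∑ p : α × β, ∑ q : α × β, L p q * π p q
      = ((∑ b1, ∑ b2, (H.dist b1 b2:ℝ) * π (x, b1) (x, b2))
          + ((∑ b1, (H.dist b1 y2:ℝ) * f b1) + a)) + (dG:ℝ)/((dG:ℝ)+dH) := by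
    rw [Fintype.sum_prod_type, ← Finset.add_sum_erase _ _ (Finset.mem_univ x)]
    have herase : ∑ u1 ∈ Finset.univ.erase x, ∑ v1, ∑ q : α × β, L (u1, v1) q * π (u1, v1) q
        = (dG:ℝ)/((dG:ℝ)+dH) := by
      have h1 : ∀ u1 ∈ Finset.univ.erase x,
          (∑ v1, ∑ q : α × β, L (u1, v1) q * π (u1, v1) q)
            = if G.Adj x u1 then 1/((dG:ℝ)+dH) else 0 := by
        intro u1 hu1
        have hux : u1 ≠ x := Finset.ne_of_mem_erase hu1
        have h2 : ∀ v1, (∑ q : α × β, L (u1, v1) q * π (u1, v1) q)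
            = muMeas (G.boxProd H) 0 (x, y1) (u1, v1) := by
          intro v1
          have h3 : ∀ q : α × β, L (u1, v1) q * π (u1, v1) q = π (u1, v1) q := by
            intro q
            have hL1 : L (u1, v1) q = 1 := by
              simp [hLdef, hux]
            rw [hL1, one_mul]
          rw [Finset.sum_congr rfl fun q _ => h3 q]
          exact hrow' (u1, v1)
        rw [Finset.sum_congr rfl fun v1 _ => h2 v1]
        have h4 : ∀ v1, muMeas (G.boxProd H) 0 (x, y1) (u1, v1)
            = if G.Adj x u1 ∧ v1 = y1 then 1/((dG:ℝ)+dH) else 0 := by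
          intro v1
          rw [mu_lem G H dG dH hG hH x y1 u1 v1,
            if_neg (fun h : u1 = x ∧ H.Adj y1 v1 => hux h.1), add_zero]
        rw [Finset.sum_congr rfl fun v1 _ => h4 v1]
        exact collapse_and _ _ _
      have hsub : ∑ u1 ∈ Finset.univ.erase x, (if G.Adj x u1 then 1/((dG:ℝ)+dH) else 0)
          = ∑ u1 : α, (if G.Adj x u1 then 1/((dG:ℝ)+dH) else 0) := by
        refine Finset.sum_subset (Finset.erase_subset _ _) (fun u _ hnotin => ?_)
        have hux : u = x := by
          by_contra hne
          exact hnotin (Finset.mem_erase.mpr ⟨hne, Finset.mem_univ u⟩)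
        rw [hux]
        exact if_neg G.irrefl
      rw [Finset.sum_congr rfl h1, hsub, cnt_lem G dG hG x]
      ring
    have hxpart : ∑ v1, ∑ q : α × β, L (x, v1) q * π (x, v1) q
        = (∑ b1, ∑ b2, (H.dist b1 b2:ℝ) * π (x, b1) (x, b2))
          + ((∑ b1, (H.dist b1 y2:ℝ) * f b1) + a) := by
      have h1 : ∀ v1, ∑ q : α × β, L (x, v1) q * π (x, v1) q
          = (∑ v2, (H.dist v1 v2:ℝ) * π (x, v1) (x, v2))
            + ((H.dist v1 y2:ℝ) + 1) * f v1 := by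
        intro v1
        rw [Fintype.sum_prod_type, ← Finset.add_sum_erase _ _ (Finset.mem_univ x)]
        congr 1
        · refine Finset.sum_congr rfl fun v2 _ => ?_
          have hL2 : L (x, v1) (x, v2) = (H.dist v1 v2 : ℝ) := by
            simp [hLdef]
          rw [hL2]
        · have h2 : ∀ u2 ∈ Finset.univ.erase x,
              (∑ v2, L (x, v1) (u2, v2) * π (x, v1) (u2, v2))
                = ((H.dist v1 y2:ℝ) + 1) * π (x, v1) (u2, y2) := by
            intro u2 hu2
            have hux : u2 ≠ x := Finset.ne_of_mem_erase hu2
            have h3 : ∀ v2, L (x, v1) (u2, v2) * π (x, v1) (u2, v2)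
                = if v2 = y2 then ((H.dist v1 y2:ℝ) + 1) * π (x, v1) (u2, v2) else 0 := by
              intro v2
              have hL3 : L (x, v1) (u2, v2)
                  = if v2 = y2 then 1 + (H.dist v1 y2:ℝ) else 0 := by
                simp [hLdef, hux]
              rw [hL3]
              by_cases hv2 : v2 = y2
              · rw [if_pos hv2, if_pos hv2]; ring
              · rw [if_neg hv2, if_neg hv2, zero_mul]
            rw [Finset.sum_congr rfl fun v2 _ => h3 v2,
              Finset.sum_ite_eq' Finset.univ y2]
            simp only [Finset.mem_univ, if_true]
          rw [Finset.sum_congr rfl h2, ← Finset.mul_sum]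
      rw [Finset.sum_congr rfl fun v1 _ => h1 v1, Finset.sum_add_distrib]
      congr 1
      have h5 : ∀ v1, ((H.dist v1 y2:ℝ) + 1) * f v1
          = (H.dist v1 y2:ℝ) * f v1 + f v1 := fun v1 => by ring
      rw [Finset.sum_congr rfl fun v1 _ => h5 v1, Finset.sum_add_distrib, ← hadef]
    rw [herase, hxpart]
  -- conclusion
  simp only [tsum_fintype]
  have hlow : ((∑ b1, ∑ b2, (H.dist b1 b2:ℝ) * π (x, b1) (x, b2))
        + ((∑ b1, (H.dist b1 y2:ℝ) * f b1) + a)) + (dG:ℝ)/((dG:ℝ)+dH)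
      ≤ ∑ p : α × β, ∑ q : α × β, ((G.boxProd H).dist p q : ℝ) * π p q := by
    rw [← hLsum]
    exact Finset.sum_le_sum fun p _ => Finset.sum_le_sum fun q _ => hterm p q
  have h2 : (dH:ℝ)/((dG:ℝ)+dH) * Wass H (muMeas H 0 y1) (muMeas H 0 y2)
      ≤ (dH:ℝ)/((dG:ℝ)+dH) * (((dG:ℝ)+dH)/dH *
        ((∑ b1, ∑ b2, (H.dist b1 b2 : ℝ) * π (x, b1) (x, b2))
          + ((∑ b1, (H.dist b1 y2 : ℝ) * f b1) + a))) :=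
    mul_le_mul_of_nonneg_left hWH (by positivity)
  have h3 : (dH:ℝ)/((dG:ℝ)+dH) * (((dG:ℝ)+dH)/dH *
        ((∑ b1, ∑ b2, (H.dist b1 b2 : ℝ) * π (x, b1) (x, b2))
          + ((∑ b1, (H.dist b1 y2 : ℝ) * f b1) + a)))
      = (∑ b1, ∑ b2, (H.dist b1 b2 : ℝ) * π (x, b1) (x, b2))
          + ((∑ b1, (H.dist b1 y2 : ℝ) * f b1) + a) := by
    field_simp
  linarith

theorem kap0_boxProd [Fintype α] [Fintype β] (G : SimpleGraph α) (H : SimpleGraph β)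
    (dG dH : ℕ) (hG : G.IsRegularOfDegree dG) (hH : H.IsRegularOfDegree dH)
    (x : α) (y1 y2 : β) (hy : H.Adj y1 y2) :
    kap0 (G.boxProd H) (x, y1) (x, y2) = (dH : ℝ) / (dG + dH) * kap0 H y1 y2 := by
  have hdH : 0 < dH := by
    rw [← hH y1]
    exact (SimpleGraph.degree_pos_iff_exists_adj _ _).mpr ⟨y2, hy⟩
  have hdHR : (0:ℝ) < dH := by exact_mod_cast hdH
  have hs0 : (0:ℝ) < (dG:ℝ) + dH := by
    have : (0:ℝ) ≤ dG := Nat.cast_nonneg dG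
    linarith
  have hW : Wass (G.boxProd H) (muMeas (G.boxProd H) 0 (x, y1)) (muMeas (G.boxProd H) 0 (x, y2))
      = (dG:ℝ)/((dG:ℝ)+dH)
        + (dH:ℝ)/((dG:ℝ)+dH) * Wass H (muMeas H 0 y1) (muMeas H 0 y2) :=
    le_antisymm (UB_lem G H dG dH hG hH x y1 y2 hy) (LB_lem G H dG dH hG hH x y1 y2 hy)
  show (1:ℝ) - Wass (G.boxProd H) (muMeas (G.boxProd H) 0 (x, y1))
        (muMeas (G.boxProd H) 0 (x, y2))
      = (dH : ℝ) / (dG + dH) * (1 - Wass H (muMeas H 0 y1) (muMeas H 0 y2))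
  rw [hW]
  have h1 : (dG:ℝ)/((dG:ℝ)+dH) + (dH:ℝ)/((dG:ℝ)+dH) = 1 := by
    field_simp
  push_cast
  set W := Wass H (muMeas H 0 y1) (muMeas H 0 y2)
  linear_combination -h1
end
end
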